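/- arXiv:1812.06967 — 8 statements merged into one kernel-verified Lean document; each statement's English description precedes it below -/
import Mathlib

section
/- Crossing Lemma: Let p ∈ (0,1) and let V₀ and V₁ be real-valued functions differentiable at p such that V₀ satisfies the ODE (V_a0) at p, V₁ satisfies the ODE (V_a1) at p, and V₀(p) = V₁(p). Then V₀′(p) − V₁′(p) = ((λ + 2ρ)/(λ·p·(1−p)))·(V₀(p) − U^S(p)). In particular, if V₀(p) = V₁(p) > U^S(p) then V₀′(p) > V₁′(p), and if V₀(p) = V₁(p) = U^S(p) then V₀′(p) = V₁′(p). -/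
noncomputable section

/-- Stationary value `U^S(p) = (λ(p u_r^R + (1-p) u_ℓ^L) - 2c)/(2ρ + λ)`. -/
def US (urR ulR urL ulL lam rho c p : ℝ) : ℝ :=
  (lam * (p * urR + (1 - p) * ulL) - 2 * c) / (2 * rho + lam)

/- Adding the two ODEs at a common value `v` cancels everything except the derivative gap,
the flow costs `2c`, and the terms that make up `(2ρ + λ) U^S(p)`. -/
theorem mul_deriv_gap_eq_of_odes {urR ulR urL ulL lam rho c p v d0 d1 : ℝ}
    (hden : 2 * rho + lam ≠ 0)
    (ode0 : c + rho * v = lam * (1 - p) * (ulL - v) + lam * p * (1 - p) * d0)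
    (ode1 : c + rho * v = lam * p * (urR - v) - lam * p * (1 - p) * d1) :
    lam * p * (1 - p) * (d0 - d1) = (2 * rho + lam) * (v - US urR ulR urL ulL lam rho c p) := by
  rw [US, mul_sub (2 * rho + lam), mul_div_cancel₀ _ hden]
  linear_combination -ode0 - ode1

theorem crossing_lemma_general
    (urR ulR urL ulL lam rho c : ℝ)
    (h_lam : 0 < lam) (h_rho : 0 ≤ rho)
    (p : ℝ) (hp : p ∈ Set.Ioo (0 : ℝ) 1)
    (V0 V1 : ℝ → ℝ)
    (ode0 : c + rho * V0 p
      = lam * (1 - p) * (ulL - V0 p) + lam * p * (1 - p) * deriv V0 p)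
    (ode1 : c + rho * V1 p
      = lam * p * (urR - V1 p) - lam * p * (1 - p) * deriv V1 p)
    (heq : V0 p = V1 p) :
    deriv V0 p - deriv V1 p
      = ((lam + 2 * rho) / (lam * p * (1 - p)))
          * (V0 p - US urR ulR urL ulL lam rho c p)
    ∧ (US urR ulR urL ulL lam rho c p < V0 p → deriv V1 p < deriv V0 p)
    ∧ (V0 p = US urR ulR urL ulL lam rho c p → deriv V0 p = deriv V1 p) := by
  obtain ⟨hp0, hp1⟩ := hp
  have hscale : 0 < lam * p * (1 - p) := by
    have : 0 < 1 - p := sub_pos.2 hp1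
    positivity
  rw [← heq] at ode1
  have key : deriv V0 p - deriv V1 p
      = ((lam + 2 * rho) / (lam * p * (1 - p))) * (V0 p - US urR ulR urL ulL lam rho c p) := by
    rw [div_mul_eq_mul_div, eq_div_iff hscale.ne', add_comm lam,
      ← mul_deriv_gap_eq_of_odes (by positivity) ode0 ode1]
    ring
  refine ⟨key, fun hgt => ?_, fun hUS => ?_⟩
  · have hrate : 0 < (lam + 2 * rho) / (lam * p * (1 - p)) := by positivity
    linarith [mul_pos hrate (sub_pos.2 hgt)]
  · rw [hUS, sub_self, mul_zero] at key
    linarith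

/-- Crossing Lemma: if `V₀` solves (V_a0) at `p`, `V₁` solves (V_a1) at `p`, and they
coincide at `p`, then the difference in derivatives is proportional to the gap with the
stationary value `U^S(p)`. -/
theorem crossing_lemma
    (urR ulR urL ulL lam rho c : ℝ)
    (h_urR : urR > max 0 ulR) (h_ulL : ulL > max 0 urL)
    (h_lam : 0 < lam) (h_rho : 0 ≤ rho) (h_c : 0 ≤ c)
    (h_nz : rho ≠ 0 ∨ c ≠ 0)
    (p : ℝ) (hp : p ∈ Set.Ioo (0 : ℝ) 1)
    (V0 V1 : ℝ → ℝ)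
    (hV0 : DifferentiableAt ℝ V0 p) (hV1 : DifferentiableAt ℝ V1 p)
    (ode0 : c + rho * V0 p
      = lam * (1 - p) * (ulL - V0 p) + lam * p * (1 - p) * deriv V0 p)
    (ode1 : c + rho * V1 p
      = lam * p * (urR - V1 p) - lam * p * (1 - p) * deriv V1 p)
    (heq : V0 p = V1 p) :
    deriv V0 p - deriv V1 p
      = ((lam + 2 * rho) / (lam * p * (1 - p)))
          * (V0 p - US urR ulR urL ulL lam rho c p)
    ∧ (US urR ulR urL ulL lam rho c p < V0 p → deriv V1 p < deriv V0 p)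
    ∧ (V0 p = US urR ulR urL ulL lam rho c p → deriv V0 p = deriv V1 p) :=
  crossing_lemma_general urR ulR urL ulL lam rho c h_lam h_rho p hp V0 V1 ode0 ode1 heq
end
end

section
/- Unimprovability Lemma: Let p ∈ (0,1) and let V be a real-valued function differentiable at p. (a) If V satisfies the ODE (V_a0) at p and V(p) ≥ U^S(p), then for every α ∈ [0,1], F(α; p, V(p), V′(p)) ≤ c + ρ·V(p), with equality at α = 0; if moreover V(p) > U^S(p), the inequality is strict for every α ∈ (0,1]. (b) If V satisfies the ODE (V_a1) at p and V(p) ≥ U^S(p), then for every α ∈ [0,1], F(α; p, V(p), V′(p)) ≤ c + ρ·V(p), with equality at α = 1; if moreover V(p) > U^S(p), the inequality is strict for every α ∈ [0,1). -/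
/-!
Both ODEs make `F(·; p, V(p), V'(p))` affine in `α` with the gap to `c + ρV(p)` proportional to
`(2ρ + λ)(U^S(p) - V(p))`: under (V_a0) the gap is `α` times it, under (V_a1) it is `(1 - α)` times
it. Since `2ρ + λ > 0`, the sign of the gap is the sign of `U^S(p) - V(p)`.
-/

set_option linter.unusedVariables false

noncomputable section

/-- `F(α; p, v, w)`: the flow payoff of attention choice `α` when the value is `v`
and its derivative is `w`. -/
def F (urR ulR urL ulL lam rho c : ℝ) (α p v w : ℝ) : ℝ :=
  α * lam * p * (urR - v) + (1 - α) * lam * (1 - p) * (ulL - v)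
    - lam * (2 * α - 1) * p * (1 - p) * w

theorem mul_US (urR ulR urL ulL lam rho c p : ℝ) (h : 2 * rho + lam ≠ 0) :
    (2 * rho + lam) * US urR ulR urL ulL lam rho c p
      = lam * (p * urR + (1 - p) * ulL) - 2 * c := by
  unfold US
  field_simp

section

variable {urR ulR urL ulL lam rho c p v w : ℝ}

theorem F_eq_sub_of_odeA0 (h : 2 * rho + lam ≠ 0)
    (hode : c + rho * v = lam * (1 - p) * (ulL - v) + lam * p * (1 - p) * w) (α : ℝ) :
    F urR ulR urL ulL lam rho c α p v w
      = c + rho * v - α * ((2 * rho + lam) * (v - US urR ulR urL ulL lam rho c p)) := by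
  unfold F
  linear_combination (2 * α - 1) * hode - α * mul_US urR ulR urL ulL lam rho c p h

theorem F_eq_sub_of_odeA1 (h : 2 * rho + lam ≠ 0)
    (hode : c + rho * v = lam * p * (urR - v) - lam * p * (1 - p) * w) (α : ℝ) :
    F urR ulR urL ulL lam rho c α p v w
      = c + rho * v - (1 - α) * ((2 * rho + lam) * (v - US urR ulR urL ulL lam rho c p)) := by
  unfold F
  linear_combination (1 - 2 * α) * hode - (1 - α) * mul_US urR ulR urL ulL lam rho c p h

theorem unimprovable_of_odeA0 (hpos : 0 < 2 * rho + lam)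
    (hode : c + rho * v = lam * (1 - p) * (ulL - v) + lam * p * (1 - p) * w)
    (hUS : US urR ulR urL ulL lam rho c p ≤ v) :
    (∀ α ∈ Set.Icc (0 : ℝ) 1, F urR ulR urL ulL lam rho c α p v w ≤ c + rho * v)
      ∧ F urR ulR urL ulL lam rho c 0 p v w = c + rho * v
      ∧ (US urR ulR urL ulL lam rho c p < v →
          ∀ α ∈ Set.Ioc (0 : ℝ) 1, F urR ulR urL ulL lam rho c α p v w < c + rho * v) := by
  simp only [F_eq_sub_of_odeA0 hpos.ne' hode]
  refine ⟨fun α hα => sub_le_self _ (mul_nonneg hα.1 (mul_nonneg hpos.le (sub_nonneg.2 hUS))),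
    by ring, fun hlt α hα => sub_lt_self _ (mul_pos hα.1 (mul_pos hpos (sub_pos.2 hlt)))⟩

theorem unimprovable_of_odeA1 (hpos : 0 < 2 * rho + lam)
    (hode : c + rho * v = lam * p * (urR - v) - lam * p * (1 - p) * w)
    (hUS : US urR ulR urL ulL lam rho c p ≤ v) :
    (∀ α ∈ Set.Icc (0 : ℝ) 1, F urR ulR urL ulL lam rho c α p v w ≤ c + rho * v)
      ∧ F urR ulR urL ulL lam rho c 1 p v w = c + rho * v
      ∧ (US urR ulR urL ulL lam rho c p < v →
          ∀ α ∈ Set.Ico (0 : ℝ) 1, F urR ulR urL ulL lam rho c α p v w < c + rho * v) := by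
  simp only [F_eq_sub_of_odeA1 hpos.ne' hode]
  refine ⟨fun α hα => sub_le_self _
      (mul_nonneg (sub_nonneg.2 hα.2) (mul_nonneg hpos.le (sub_nonneg.2 hUS))),
    by ring, fun hlt α hα => sub_lt_self _
      (mul_pos (sub_pos.2 hα.2) (mul_pos hpos (sub_pos.2 hlt)))⟩

end

theorem unimprovability_general
    (urR ulR urL ulL lam rho c : ℝ)
    (h_lam : 0 < lam) (h_rho : 0 ≤ rho)
    (p : ℝ)
    (V : ℝ → ℝ) :
    -- (a) if V solves (V_a0) at p and V(p) ≥ U^S(p)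
    ((c + rho * V p = lam * (1 - p) * (ulL - V p) + lam * p * (1 - p) * deriv V p
        ∧ US urR ulR urL ulL lam rho c p ≤ V p) →
      ((∀ α ∈ Set.Icc (0 : ℝ) 1,
          F urR ulR urL ulL lam rho c α p (V p) (deriv V p) ≤ c + rho * V p)
        ∧ F urR ulR urL ulL lam rho c 0 p (V p) (deriv V p) = c + rho * V p
        ∧ (US urR ulR urL ulL lam rho c p < V p →
            ∀ α ∈ Set.Ioc (0 : ℝ) 1,
              F urR ulR urL ulL lam rho c α p (V p) (deriv V p) < c + rho * V p)))
    ∧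
    -- (b) if V solves (V_a1) at p and V(p) ≥ U^S(p)
    ((c + rho * V p = lam * p * (urR - V p) - lam * p * (1 - p) * deriv V p
        ∧ US urR ulR urL ulL lam rho c p ≤ V p) →
      ((∀ α ∈ Set.Icc (0 : ℝ) 1,
          F urR ulR urL ulL lam rho c α p (V p) (deriv V p) ≤ c + rho * V p)
        ∧ F urR ulR urL ulL lam rho c 1 p (V p) (deriv V p) = c + rho * V p
        ∧ (US urR ulR urL ulL lam rho c p < V p →
            ∀ α ∈ Set.Ico (0 : ℝ) 1,
              F urR ulR urL ulL lam rho c α p (V p) (deriv V p) < c + rho * V p))) := by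
  have hpos : 0 < 2 * rho + lam := by linarith
  exact ⟨fun ⟨hode, hUS⟩ => unimprovable_of_odeA0 hpos hode hUS,
    fun ⟨hode, hUS⟩ => unimprovable_of_odeA1 hpos hode hUS⟩

/-- Unimprovability Lemma. -/
theorem unimprovability
    (urR ulR urL ulL lam rho c : ℝ)
    (h_urR : urR > max 0 ulR) (h_ulL : ulL > max 0 urL)
    (h_lam : 0 < lam) (h_rho : 0 ≤ rho) (h_c : 0 ≤ c)
    (h_nz : rho ≠ 0 ∨ c ≠ 0)
    (p : ℝ) (hp : p ∈ Set.Ioo (0 : ℝ) 1)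
    (V : ℝ → ℝ) (hV : DifferentiableAt ℝ V p) :
    -- (a) if V solves (V_a0) at p and V(p) ≥ U^S(p)
    ((c + rho * V p = lam * (1 - p) * (ulL - V p) + lam * p * (1 - p) * deriv V p
        ∧ US urR ulR urL ulL lam rho c p ≤ V p) →
      ((∀ α ∈ Set.Icc (0 : ℝ) 1,
          F urR ulR urL ulL lam rho c α p (V p) (deriv V p) ≤ c + rho * V p)
        ∧ F urR ulR urL ulL lam rho c 0 p (V p) (deriv V p) = c + rho * V p
        ∧ (US urR ulR urL ulL lam rho c p < V p →
            ∀ α ∈ Set.Ioc (0 : ℝ) 1,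
              F urR ulR urL ulL lam rho c α p (V p) (deriv V p) < c + rho * V p)))
    ∧
    -- (b) if V solves (V_a1) at p and V(p) ≥ U^S(p)
    ((c + rho * V p = lam * p * (urR - V p) - lam * p * (1 - p) * deriv V p
        ∧ US urR ulR urL ulL lam rho c p ≤ V p) →
      ((∀ α ∈ Set.Icc (0 : ℝ) 1,
          F urR ulR urL ulL lam rho c α p (V p) (deriv V p) ≤ c + rho * V p)
        ∧ F urR ulR urL ulL lam rho c 1 p (V p) (deriv V p) = c + rho * V p
        ∧ (US urR ulR urL ulL lam rho c p < V p →
            ∀ α ∈ Set.Ico (0 : ℝ) 1,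
              F urR ulR urL ulL lam rho c α p (V p) (deriv V p) < c + rho * V p))) :=
  unimprovability_general urR ulR urL ulL lam rho c h_lam h_rho p V
end
end

section
/- If condition (EXP) holds, i.e. U^FA(p̂) > U(p̂), then the cutoff beliefs are ordered as 0 < p̲* < p̂ < p̄* < 1. -/
set_option linter.unusedVariables false

noncomputable section

def Ur (urR ulR urL ulL lam rho c p : ℝ) : ℝ := p * urR + (1 - p) * urL

def Ul (urR ulR urL ulL lam rho c p : ℝ) : ℝ := p * ulR + (1 - p) * ulL

def U (urR ulR urL ulL lam rho c p : ℝ) : ℝ :=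
  max (Ur urR ulR urL ulL lam rho c p) (Ul urR ulR urL ulL lam rho c p)

/-- Full-attention value `U^FA(p)`. -/
def UFA (urR ulR urL ulL lam rho c p : ℝ) : ℝ :=
  (lam * (p * urR + (1 - p) * ulL) - c) / (rho + lam)

/-- Lower boundary of the experimentation region. -/
def plowStar (urR ulR urL ulL lam rho c : ℝ) : ℝ :=
  (ulL * rho + c) / (rho * (ulL - ulR) + (urR - ulR) * lam)

/-- Upper boundary of the experimentation region. -/
def phighStar (urR ulR urL ulL lam rho c : ℝ) : ℝ :=
  ((ulL - urL) * lam - urL * rho - c) / (rho * (urR - urL) + (ulL - urL) * lam)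

/-- The belief at which `U_r` and `U_ℓ` cross. -/
def phat (urR ulR urL ulL lam rho c : ℝ) : ℝ :=
  (ulL - urL) / ((urR - ulR) + (ulL - urL))

/-!
With `a = u_r^R - u_ℓ^R`, `b = u_ℓ^L - u_r^L` and `s = a + b`, we have `p̂ = b / s`, and (EXP)
at `p̂` clears denominators to the single polynomial inequality `ρ s U(p̂) + c s < λ a b`.
Cross-multiplied, `p̲* < p̂` is this inequality, and so is `1 - p̄* < 1 - p̂` (the problem is
symmetric under exchanging the states and the actions, `p ↔ 1 - p`). Since the numerators
`u_ℓ^L ρ + c` and `u_r^R ρ + c` are positive, the same inequality forces the denominators of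
`p̲*` and `p̄*` to be positive, which gives the remaining bounds.
-/

section

variable {K : Type*} [Field K] [LinearOrder K] [IsStrictOrderedRing K]

lemma pos_and_div_lt_div_of_mul_lt_mul {n d q s : K} (hn : 0 < n) (hq : 0 < q) (hs : 0 < s)
    (h : s * n < q * d) : 0 < d ∧ n / d < q / s := by
  have hd : 0 < d := pos_of_mul_pos_right (by nlinarith) hq.le
  exact ⟨hd, (div_lt_div_iff₀ hd hs).2 (by linarith)⟩

lemma mul_add_pos_of_ne_zero_or_ne_zero {u rho c : K} (hu : 0 < u) (hrho : 0 ≤ rho)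
    (hc : 0 ≤ c) (hnz : rho ≠ 0 ∨ c ≠ 0) : 0 < u * rho + c := by
  rcases hnz with hrho' | hc'
  · have := mul_pos hu (lt_of_le_of_ne hrho (Ne.symm hrho'))
    linarith
  · have := mul_nonneg hu.le hrho
    linarith [lt_of_le_of_ne hc (Ne.symm hc')]

end

section

variable {urR ulR urL ulL lam rho c : ℝ}

lemma one_sub_phat (hs : (urR - ulR) + (ulL - urL) ≠ 0) :
    1 - phat urR ulR urL ulL lam rho c = (urR - ulR) / ((urR - ulR) + (ulL - urL)) := by
  unfold phat
  field_simp
  ring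

lemma one_sub_phighStar (hD : rho * (urR - urL) + (ulL - urL) * lam ≠ 0) :
    1 - phighStar urR ulR urL ulL lam rho c
      = (urR * rho + c) / (rho * (urR - urL) + (ulL - urL) * lam) := by
  unfold phighStar
  field_simp
  ring

lemma lt_mul_of_Ul_phat_lt_UFA_phat (hlam : 0 < lam) (hrho : 0 ≤ rho)
    (hs : 0 < (urR - ulR) + (ulL - urL))
    (h : Ul urR ulR urL ulL lam rho c (phat urR ulR urL ulL lam rho c)
      < UFA urR ulR urL ulL lam rho c (phat urR ulR urL ulL lam rho c)) :
    rho * ((ulL - urL) * ulR + (urR - ulR) * ulL) + c * ((urR - ulR) + (ulL - urL))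
      < lam * (urR - ulR) * (ulL - urL) := by
  unfold Ul UFA phat at h
  rw [lt_div_iff₀ (by linarith), ← mul_lt_mul_iff_of_pos_right hs] at h
  field_simp at h
  linarith

end

/-- If (EXP) holds, i.e. `U^FA(p̂) > U(p̂)`, then `0 < p̲* < p̂ < p̄* < 1`. -/
theorem cutoff_ordering_under_EXP
    (urR ulR urL ulL lam rho c : ℝ)
    (h_urR : urR > max 0 ulR) (h_ulL : ulL > max 0 urL)
    (h_lam : 0 < lam) (h_rho : 0 ≤ rho) (h_c : 0 ≤ c)
    (h_nz : rho ≠ 0 ∨ c ≠ 0)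
    (h_EXP : UFA urR ulR urL ulL lam rho c (phat urR ulR urL ulL lam rho c)
      > U urR ulR urL ulL lam rho c (phat urR ulR urL ulL lam rho c)) :
    0 < plowStar urR ulR urL ulL lam rho c
    ∧ plowStar urR ulR urL ulL lam rho c < phat urR ulR urL ulL lam rho c
    ∧ phat urR ulR urL ulL lam rho c < phighStar urR ulR urL ulL lam rho c
    ∧ phighStar urR ulR urL ulL lam rho c < 1 := by
  obtain ⟨hR0, hRl⟩ := max_lt_iff.mp h_urR
  obtain ⟨hL0, hLr⟩ := max_lt_iff.mp h_ulL
  have ha : 0 < urR - ulR := sub_pos.2 hRl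
  have hb : 0 < ulL - urL := sub_pos.2 hLr
  have hs : 0 < (urR - ulR) + (ulL - urL) := add_pos ha hb
  have hkey := lt_mul_of_Ul_phat_lt_UFA_phat h_lam h_rho hs
    ((le_max_right _ _).trans_lt h_EXP)
  have hNlow := mul_add_pos_of_ne_zero_or_ne_zero hL0 h_rho h_c h_nz
  have hNhigh := mul_add_pos_of_ne_zero_or_ne_zero hR0 h_rho h_c h_nz
  obtain ⟨hDlow, hlow⟩ := pos_and_div_lt_div_of_mul_lt_mul hNlow hb hs
    (d := rho * (ulL - ulR) + (urR - ulR) * lam) (by linarith)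
  obtain ⟨hDhigh, hhigh⟩ := pos_and_div_lt_div_of_mul_lt_mul hNhigh ha hs
    (d := rho * (urR - urL) + (ulL - urL) * lam) (by linarith)
  rw [← one_sub_phighStar hDhigh.ne', ← one_sub_phat hs.ne'] at hhigh
  have hhigh_lt_one := div_pos hNhigh hDhigh
  rw [← one_sub_phighStar hDhigh.ne'] at hhigh_lt_one
  exact ⟨div_pos hNlow hDlow, hlow, (sub_lt_sub_iff_left 1).1 hhigh, sub_pos.1 hhigh_lt_one⟩
end
end

section
/- Properties of the left own-biased branch: assume ρ > 0 and condition (EXP). Then the function V̲_own satisfies the ODE (V_a1) at every p ∈ (0,1); it satisfies value matching and smooth pasting at p̲*: V̲_own(p̲*) = U_ℓ(p̲*) and V̲_own′(p̲*) = u_ℓ^R − u_ℓ^L; V̲_own is strictly convex on (p̲*, 1]; and V̲_own(p) > U_ℓ(p) for every p ∈ (p̲*, 1]. -/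
set_option linter.unusedVariables false

noncomputable section

/-- Left branch of the own-biased value (for `ρ > 0`); since `ρ/λ > 0`, the real-power
formula automatically extends by continuity to `p = 1` with value `(u_r^R λ − c)/(λ+ρ)`. -/
def Vlown (urR ulR urL ulL lam rho c p : ℝ) : ℝ :=
  -(c / rho) * (1 - p) + ((urR * lam - c) / (lam + rho)) * p
    + (lam * (c + ulL * rho) / (rho * (lam + rho)))
      * (plowStar urR ulR urL ulL lam rho c
          / (1 - plowStar urR ulR urL ulL lam rho c)) ^ (rho / lam)
      * ((1 - p) / p) ^ (rho / lam) * (1 - p)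

/-!
Write `r = ρ/λ` and `φ(p) = ((1 - p)/p)^r (1 - p)`. Then `p (1 - p) φ' = -(r + p) φ`, so `φ`
solves the homogeneous part of (V_a1), and `φ'' > 0` on `(0, 1)`. `V̲_own` is an affine particular
solution plus `K φ`, with `K > 0` chosen so that value matching and smooth pasting hold at `p̲*`.
Hence `V̲_own` is strictly convex and lies strictly above its tangent line at `p̲*`, which is
`U_ℓ`.
-/

open Set

lemma StrictConvexOn.affine_add_const_mul {s : Set ℝ} {f : ℝ → ℝ}
    (hf : StrictConvexOn ℝ s f) {K : ℝ} (hK : 0 < K) (a b : ℝ) :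
    StrictConvexOn ℝ s (fun p => a + b * p + K * f p) := by
  refine ⟨hf.1, fun x hx y hy hxy α β hα hβ hαβ => ?_⟩
  have hlt := mul_lt_mul_of_pos_left (hf.2 hx hy hxy hα hβ hαβ) hK
  simp only [smul_eq_mul] at hlt ⊢
  obtain rfl : β = 1 - α := by linarith
  linarith

def oddsTerm (r p : ℝ) : ℝ := ((1 - p) / p) ^ r * (1 - p)

def oddsTermDeriv (r p : ℝ) : ℝ := -((1 - p) / p) ^ r * ((r + p) / p)

section OddsTerm

variable {p : ℝ}

lemma hasDerivAt_odds_rpow (r : ℝ) (hp : p ∈ Ioo 0 1) :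
    HasDerivAt (fun q => ((1 - q) / q) ^ r) (-(r * ((1 - p) / p) ^ (r - 1)) / p ^ 2) p := by
  have hodds : HasDerivAt (fun q => (1 - q) / q) ((-1 * p - (1 - p) * 1) / p ^ 2) p :=
    ((hasDerivAt_id' p).const_sub 1).div (hasDerivAt_id' p) hp.1.ne'
  refine (hodds.rpow_const (Or.inl (div_pos (sub_pos.2 hp.2) hp.1).ne')).congr_deriv ?_
  field_simp
  ring

lemma hasDerivAt_oddsTerm (r : ℝ) (hp : p ∈ Ioo 0 1) :
    HasDerivAt (oddsTerm r) (oddsTermDeriv r p) p := by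
  have hodds : (1 - p) / p ≠ 0 := (div_pos (sub_pos.2 hp.2) hp.1).ne'
  refine ((hasDerivAt_odds_rpow r hp).mul ((hasDerivAt_id' p).const_sub 1)).congr_deriv ?_
  rw [oddsTermDeriv, ← div_mul_cancel₀ (((1 - p) / p) ^ r) hodds, ← Real.rpow_sub_one hodds]
  field_simp
  ring

lemma hasDerivAt_oddsTermDeriv (r : ℝ) (hp : p ∈ Ioo 0 1) :
    HasDerivAt (oddsTermDeriv r) (r * (r + 1) * ((1 - p) / p) ^ (r - 1) / p ^ 3) p := by
  have hodds : (1 - p) / p ≠ 0 := (div_pos (sub_pos.2 hp.2) hp.1).ne'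
  have hfrac : HasDerivAt (fun q => (r + q) / q) ((1 * p - (r + p) * 1) / p ^ 2) p :=
    ((hasDerivAt_id' p).const_add r).div (hasDerivAt_id' p) hp.1.ne'
  refine ((hasDerivAt_odds_rpow r hp).neg.mul hfrac).congr_deriv ?_
  rw [Pi.neg_apply, ← div_mul_cancel₀ (((1 - p) / p) ^ r) hodds, ← Real.rpow_sub_one hodds]
  field_simp
  ring

lemma mul_one_sub_mul_oddsTermDeriv (r : ℝ) (hp : p ≠ 0) :
    p * (1 - p) * oddsTermDeriv r p = -(r + p) * oddsTerm r p := by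
  rw [oddsTermDeriv, oddsTerm]
  field_simp

lemma continuousOn_oddsTerm {r : ℝ} (hr : 0 < r) : ContinuousOn (oddsTerm r) (Ioc 0 1) :=
  fun q hq => ContinuousAt.continuousWithinAt <|
    (((continuousAt_const.sub continuousAt_id).div continuousAt_id hq.1.ne').rpow_const
      (Or.inr hr.le)).mul (continuousAt_const.sub continuousAt_id)

lemma strictConvexOn_oddsTerm {r : ℝ} (hr : 0 < r) :
    StrictConvexOn ℝ (Ioc 0 1) (oddsTerm r) := by
  refine strictConvexOn_of_deriv2_pos (convex_Ioc 0 1) (continuousOn_oddsTerm hr) fun q hq => ?_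
  rw [interior_Ioc] at hq
  have hderiv : deriv (oddsTerm r) =ᶠ[nhds q] oddsTermDeriv r :=
    Filter.eventually_of_mem (isOpen_Ioo.mem_nhds hq) fun x hx =>
      (hasDerivAt_oddsTerm r hx).deriv
  rw [Function.iterate_succ_apply, Function.iterate_one, hderiv.deriv_eq,
    (hasDerivAt_oddsTermDeriv r hq).deriv]
  have hodds : 0 < (1 - q) / q := div_pos (sub_pos.2 hq.2) hq.1
  exact div_pos (mul_pos (mul_pos hr (by linarith)) (Real.rpow_pos_of_pos hodds _)) (pow_pos hq.1 3)

lemma odds_rpow_mul_odds_rpow {P : ℝ} (r : ℝ) (hP : P ∈ Ioo 0 1) :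
    (P / (1 - P)) ^ r * ((1 - P) / P) ^ r = 1 := by
  have h1P : 0 < 1 - P := sub_pos.2 hP.2
  rw [← Real.mul_rpow (div_pos hP.1 h1P).le (div_pos h1P hP.1).le,
    div_mul_div_cancel₀ h1P.ne', div_self hP.1.ne', Real.one_rpow]

end OddsTerm

def VlownCoeff (urR ulR urL ulL lam rho c : ℝ) : ℝ :=
  lam * (c + ulL * rho) / (rho * (lam + rho))
    * (plowStar urR ulR urL ulL lam rho c / (1 - plowStar urR ulR urL ulL lam rho c)) ^ (rho / lam)

section Model

variable {urR ulR urL ulL lam rho c p : ℝ}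

local notation "V" => Vlown urR ulR urL ulL lam rho c
local notation "K" => VlownCoeff urR ulR urL ulL lam rho c
local notation "P" => plowStar urR ulR urL ulL lam rho c
local notation "q̂" => phat urR ulR urL ulL lam rho c
local notation "Uℓ" => Ul urR ulR urL ulL lam rho c

lemma Vlown_eq_affine_add_mul_oddsTerm :
    V = fun p => -(c / rho) + (c / rho + (urR * lam - c) / (lam + rho)) * p
      + K * oddsTerm (rho / lam) p := by
  funext p
  simp only [Vlown, VlownCoeff, oddsTerm]
  ring

lemma hasDerivAt_Vlown (hp : p ∈ Ioo 0 1) :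
    HasDerivAt V (c / rho + (urR * lam - c) / (lam + rho) + K * oddsTermDeriv (rho / lam) p) p := by
  rw [Vlown_eq_affine_add_mul_oddsTerm]
  exact (((hasDerivAt_id' p).const_mul _).const_add _).add
    ((hasDerivAt_oddsTerm _ hp).const_mul _) |>.congr_deriv (by ring)

lemma Vlown_ode (hlam : 0 < lam) (hrho : 0 < rho) (hp : p ∈ Ioo 0 1) :
    c + rho * V p = lam * p * (urR - V p) - lam * p * (1 - p) * deriv V p := by
  have hhom := mul_one_sub_mul_oddsTermDeriv (rho / lam) hp.1.ne'
  rw [(hasDerivAt_Vlown hp).deriv, Vlown_eq_affine_add_mul_oddsTerm]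
  dsimp only
  generalize oddsTermDeriv (rho / lam) p = d, oddsTerm (rho / lam) p = t at hhom ⊢
  linear_combination (norm := skip) (lam * K) * hhom
  field_simp
  ring

lemma phat_mem_Ioo (hR : ulR < urR) (hL : urL < ulL) : q̂ ∈ Ioo 0 1 := by
  have hsum : 0 < (urR - ulR) + (ulL - urL) := by linarith
  exact ⟨div_pos (by linarith) hsum, (div_lt_one hsum).2 (by linarith)⟩

lemma Ur_phat_eq_Ul_phat (hR : ulR < urR) (hL : urL < ulL) :
    Ur urR ulR urL ulL lam rho c q̂ = Uℓ q̂ := by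
  have hsum : (urR - ulR) + (ulL - urL) ≠ 0 := by linarith
  simp only [Ur, Ul, phat]
  field_simp
  ring

/-- At `p̂`, (EXP) says that `p̂` times the denominator of `p̲*` exceeds its numerator, so
`p̲* < p̂ < 1`. -/
lemma plowStar_mem_Ioo (h_urR : urR > max 0 ulR) (h_ulL : ulL > max 0 urL)
    (h_lam : 0 < lam) (h_rho : 0 < rho) (h_c : 0 ≤ c)
    (h_EXP : UFA urR ulR urL ulL lam rho c q̂ > U urR ulR urL ulL lam rho c q̂) :
    P ∈ Ioo 0 1 := by
  obtain ⟨-, hR⟩ := max_lt_iff.1 h_urR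
  obtain ⟨hulL, hL⟩ := max_lt_iff.1 h_ulL
  obtain ⟨hq0, hq1⟩ := phat_mem_Ioo hR hL
  rw [U, Ur_phat_eq_Ul_phat hR hL, max_self, UFA, Ul, gt_iff_lt, lt_div_iff₀ (by linarith)]
    at h_EXP
  have hN : 0 < ulL * rho + c := by positivity
  have hEXP : ulL * rho + c < q̂ * (rho * (ulL - ulR) + (urR - ulR) * lam) := by linarith
  have hD : 0 < rho * (ulL - ulR) + (urR - ulR) * lam :=
    pos_of_mul_pos_right (hN.trans hEXP) hq0.le
  refine ⟨div_pos hN hD, (div_lt_one hD).2 (hEXP.trans ?_)⟩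
  exact mul_lt_of_lt_one_left hD hq1

lemma VlownCoeff_mul_odds_rpow (hP : P ∈ Ioo 0 1) :
    K * ((1 - P) / P) ^ (rho / lam) = lam * (c + ulL * rho) / (rho * (lam + rho)) := by
  rw [VlownCoeff, mul_assoc, odds_rpow_mul_odds_rpow _ hP, mul_one]

lemma VlownCoeff_pos (hlam : 0 < lam) (hrho : 0 < rho) (hulL : 0 < ulL) (hc : 0 ≤ c)
    (hP : P ∈ Ioo 0 1) : 0 < K := by
  have hodds : 0 < P / (1 - P) := div_pos hP.1 (sub_pos.2 hP.2)
  unfold VlownCoeff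
  positivity

lemma plowStar_mul_denom (hP : P ∈ Ioo 0 1) :
    P * (rho * (ulL - ulR) + (urR - ulR) * lam) = ulL * rho + c :=
  div_mul_cancel₀ _ (div_ne_zero_iff.1 hP.1.ne').2

lemma Vlown_plowStar (hlam : 0 < lam) (hrho : 0 < rho) (hP : P ∈ Ioo 0 1) : V P = Uℓ P := by
  rw [Vlown_eq_affine_add_mul_oddsTerm]
  dsimp only
  rw [oddsTerm, ← mul_assoc, VlownCoeff_mul_odds_rpow hP, Ul]
  have hPD := plowStar_mul_denom hP
  field_simp
  linear_combination (norm := ring_nf) rho * hPD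

lemma hasDerivAt_Vlown_plowStar (hlam : 0 < lam) (hrho : 0 < rho) (hP : P ∈ Ioo 0 1) :
    HasDerivAt V (ulR - ulL) P := by
  refine (hasDerivAt_Vlown hP).congr_deriv ?_
  rw [oddsTermDeriv, neg_mul, mul_neg, ← mul_assoc, VlownCoeff_mul_odds_rpow hP]
  have hPD := plowStar_mul_denom hP
  have hP0 := hP.1.ne'
  field_simp
  linear_combination (norm := ring_nf) rho * hPD

lemma strictConvexOn_Vlown (hlam : 0 < lam) (hrho : 0 < rho) (hulL : 0 < ulL) (hc : 0 ≤ c)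
    (hP : P ∈ Ioo 0 1) : StrictConvexOn ℝ (Ioc 0 1) V := by
  rw [Vlown_eq_affine_add_mul_oddsTerm]
  exact (strictConvexOn_oddsTerm (div_pos hrho hlam)).affine_add_const_mul
    (VlownCoeff_pos hlam hrho hulL hc hP) _ _

lemma Ul_lt_Vlown (hlam : 0 < lam) (hrho : 0 < rho) (hulL : 0 < ulL) (hc : 0 ≤ c)
    (hP : P ∈ Ioo 0 1) (hp : p ∈ Ioc P 1) : Uℓ p < V p := by
  have hslope := (strictConvexOn_Vlown hlam hrho hulL hc hP).lt_slope_of_hasDerivAt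
    ⟨hP.1, hP.2.le⟩ ⟨hP.1.trans hp.1, hp.2⟩ hp.1 (hasDerivAt_Vlown_plowStar hlam hrho hP)
  rw [slope_def_field, lt_div_iff₀ (sub_pos.2 hp.1), Vlown_plowStar hlam hrho hP] at hslope
  rw [Ul] at hslope ⊢
  linear_combination hslope

end Model

/-- Properties of the left own-biased branch: it solves ODE (V_a1) on `(0,1)`,
value matching and smooth pasting hold at `p̲*`, it is strictly convex on `(p̲*, 1]`,
and it strictly exceeds `U_ℓ` on `(p̲*, 1]`. -/
theorem Vlown_properties
    (urR ulR urL ulL lam rho c : ℝ)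
    (h_urR : urR > max 0 ulR) (h_ulL : ulL > max 0 urL)
    (h_lam : 0 < lam) (h_rho : 0 < rho) (h_c : 0 ≤ c)
    (h_EXP : UFA urR ulR urL ulL lam rho c (phat urR ulR urL ulL lam rho c)
      > U urR ulR urL ulL lam rho c (phat urR ulR urL ulL lam rho c)) :
    (∀ p ∈ Set.Ioo (0 : ℝ) 1,
      DifferentiableAt ℝ (Vlown urR ulR urL ulL lam rho c) p
      ∧ c + rho * Vlown urR ulR urL ulL lam rho c p
          = lam * p * (urR - Vlown urR ulR urL ulL lam rho c p)
            - lam * p * (1 - p) * deriv (Vlown urR ulR urL ulL lam rho c) p)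
    ∧ Vlown urR ulR urL ulL lam rho c (plowStar urR ulR urL ulL lam rho c)
        = Ul urR ulR urL ulL lam rho c (plowStar urR ulR urL ulL lam rho c)
    ∧ deriv (Vlown urR ulR urL ulL lam rho c) (plowStar urR ulR urL ulL lam rho c)
        = ulR - ulL
    ∧ StrictConvexOn ℝ (Set.Ioc (plowStar urR ulR urL ulL lam rho c) 1)
        (Vlown urR ulR urL ulL lam rho c)
    ∧ ∀ p ∈ Set.Ioc (plowStar urR ulR urL ulL lam rho c) 1,
        Ul urR ulR urL ulL lam rho c p < Vlown urR ulR urL ulL lam rho c p := by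
  have hP := plowStar_mem_Ioo h_urR h_ulL h_lam h_rho h_c h_EXP
  have hulL : 0 < ulL := (le_max_left 0 urL).trans_lt h_ulL
  exact ⟨fun p hp => ⟨(hasDerivAt_Vlown hp).differentiableAt, Vlown_ode h_lam h_rho hp⟩,
    Vlown_plowStar h_lam h_rho hP, (hasDerivAt_Vlown_plowStar h_lam h_rho hP).deriv,
    (strictConvexOn_Vlown h_lam h_rho hulL h_c hP).subset (Ioc_subset_Ioc_left hP.1.le)
      (convex_Ioc _ _),
    fun p hp => Ul_lt_Vlown h_lam h_rho hulL h_c hP hp⟩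
end
end

section
/- Properties of the opposite-biased value: assume ρ > 0. Then V̲_opp satisfies the ODE (V_a0) at every p ∈ (0,1) and V̄_opp satisfies the ODE (V_a1) at every p ∈ (0,1); value matching and smooth pasting hold at p*: V̲_opp(p*) = V̄_opp(p*) = U^S(p*) and V̲_opp′(p*) = V̄_opp′(p*) = λ(u_r^R − u_ℓ^L)/(2ρ + λ); both V̲_opp and V̄_opp are strictly convex on (0,1); and the function V_opp defined by V_opp(p) = V̲_opp(p) for p ≤ p* and V_opp(p) = V̄_opp(p) for p ≥ p* satisfies V_opp(p) > U^S(p) for every p ∈ [0,1] with p ≠ p*. -/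
set_option linter.unusedVariables false

noncomputable section

/-- The absorbing belief `p*`. -/
def pstar (urR ulR urL ulL lam rho c : ℝ) : ℝ :=
  (ulL * rho + c) / ((urR * rho + c) + (ulL * rho + c))

/-- Left branch of the opposite-biased value (for `ρ > 0`); since `ρ/λ > 0`, the real-power
formula automatically extends by continuity to `p = 0` with value `(u_ℓ^L λ − c)/(λ+ρ)`. -/
def Vlopp (urR ulR urL ulL lam rho c p : ℝ) : ℝ :=
  -(c / rho) * p + ((ulL * lam - c) / (lam + rho)) * (1 - p)
    + (lam / (rho * (2 * rho + lam))) * (lam * (urR * rho + c) / (lam + rho))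
      * (((1 - pstar urR ulR urL ulL lam rho c) / pstar urR ulR urL ulL lam rho c)
          * (p / (1 - p))) ^ (rho / lam) * p

/-- Right branch of the opposite-biased value (for `ρ > 0`); extends by continuity to
`p = 1` with value `(u_r^R λ − c)/(λ+ρ)`. -/
def Vhopp (urR ulR urL ulL lam rho c p : ℝ) : ℝ :=
  -(c / rho) * (1 - p) + ((urR * lam - c) / (lam + rho)) * p
    + (lam / (rho * (2 * rho + lam))) * (lam * (ulL * rho + c) / (lam + rho))
      * ((pstar urR ulR urL ulL lam rho c / (1 - pstar urR ulR urL ulL lam rho c))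
          * ((1 - p) / p)) ^ (rho / lam) * (1 - p)

/-!
Both branches have the form `a p + b (1 - p) + K (C p / (1 - p)) ^ r p` with `r = ρ / λ`. The
affine part is a particular solution of (V_a0), and `(p / (1 - p)) ^ r p` solves the homogeneous
equation; its second derivative `(C p / (1 - p)) ^ r r (r + 1) / (p (1 - p) ^ 2)` is positive, which
gives strict convexity. The choice `C = (1 - p*) / p*` makes the power equal to `1` at `p*`, so
value matching and smooth pasting are algebraic identities. Then `U^S` is the tangent line at `p*`
of the strictly convex `V̲_opp`, hence lies strictly below it. Exchanging the two states
(`u_r^R ↔ u_ℓ^L`, `p ↦ 1 - p`, `p* ↦ 1 - p*`) turns `V̄_opp` into `V̲_opp` and transfers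
everything to the right branch.
-/

open Set

lemma StrictConvexOn.add_mul_sub_lt_of_hasDerivAt {S : Set ℝ} {f : ℝ → ℝ} {x y f' : ℝ}
    (hf : StrictConvexOn ℝ S f) (hx : x ∈ S) (hy : y ∈ S) (hxy : x ≠ y)
    (hf' : HasDerivAt f f' y) : f y + f' * (x - y) < f x := by
  rcases hxy.lt_or_gt with h | h
  · have hslope := hf.slope_lt_of_hasDerivAt hx hy h hf'
    rw [slope_def_field, div_lt_iff₀ (sub_pos.2 h)] at hslope
    linarith
  · have hslope := hf.lt_slope_of_hasDerivAt hy hx h hf'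
    rw [slope_def_field, lt_div_iff₀ (sub_pos.2 h)] at hslope
    linarith

lemma StrictConvexOn.comp_one_sub {f : ℝ → ℝ} (hf : StrictConvexOn ℝ (Ioo 0 1) f) :
    StrictConvexOn ℝ (Ioo 0 1) fun x => f (1 - x) := by
  refine ⟨convex_Ioo 0 1, fun x hx y hy hxy a b ha hb hab => ?_⟩
  have h := hf.2 (x := 1 - x) (y := 1 - y) ⟨by linarith [hx.2], by linarith [hx.1]⟩
    ⟨by linarith [hy.2], by linarith [hy.1]⟩ (by contrapose! hxy; linarith) ha hb hab
  simp only [smul_eq_mul] at h ⊢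
  convert h using 2
  linear_combination -hab

lemma strictConvexOn_of_hasDerivAt2_pos {s : Set ℝ} (hs : IsOpen s)
    (hconv : Convex ℝ s) {f f' f'' : ℝ → ℝ} (hf : ∀ x ∈ s, HasDerivAt f (f' x) x)
    (hf' : ∀ x ∈ s, HasDerivAt f' (f'' x) x) (hf''_pos : ∀ x ∈ s, 0 < f'' x) :
    StrictConvexOn ℝ s f := by
  refine strictConvexOn_of_deriv2_pos hconv
    (fun x hx => (hf x hx).continuousAt.continuousWithinAt) fun x hx => ?_
  rw [hs.interior_eq] at hx
  have hderiv : deriv f =ᶠ[nhds x] f' :=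
    Filter.eventuallyEq_of_mem (hs.mem_nhds hx) fun y hy => (hf y hy).deriv
  rw [Function.iterate_succ_apply, Function.iterate_one, hderiv.deriv_eq, (hf' x hx).deriv]
  exact hf''_pos x hx

lemma hasDerivAt_rpow_odds {C r p : ℝ} (hC : C ≠ 0) (hp0 : p ≠ 0) (hp1 : 1 - p ≠ 0) :
    HasDerivAt (fun q => (C * (q / (1 - q))) ^ r)
      ((C * (p / (1 - p))) ^ r * (r / (p * (1 - p)))) p := by
  have hodds : HasDerivAt (fun q => C * (q / (1 - q))) (C * (1 / (1 - p) ^ 2)) p :=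
    (((hasDerivAt_id' p).div ((hasDerivAt_id' p).const_sub 1) hp1).const_mul C).congr_deriv
      (by field_simp; ring)
  have hbase : C * (p / (1 - p)) ≠ 0 := mul_ne_zero hC (div_ne_zero hp0 hp1)
  refine (hodds.rpow_const (p := r) (Or.inl hbase)).congr_deriv ?_
  rw [Real.rpow_sub_one hbase]
  field_simp

def branch (a b K C r p : ℝ) : ℝ :=
  a * p + b * (1 - p) + K * (C * (p / (1 - p))) ^ r * p

def branchDeriv (a b K C r p : ℝ) : ℝ :=
  a - b + K * (C * (p / (1 - p))) ^ r * ((r + 1 - p) / (1 - p))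

lemma hasDerivAt_branch (a b K : ℝ) {C r p : ℝ} (hC : C ≠ 0) (hp0 : p ≠ 0)
    (hp1 : 1 - p ≠ 0) :
    HasDerivAt (branch a b K C r) (branchDeriv a b K C r p) p := by
  refine ((((hasDerivAt_id' p).const_mul a).add
    (((hasDerivAt_id' p).const_sub 1).const_mul b)).add
    (((hasDerivAt_rpow_odds (r := r) hC hp0 hp1).const_mul K).mul
      (hasDerivAt_id' p))).congr_deriv ?_
  rw [branchDeriv]
  field_simp
  ring

lemma hasDerivAt_branchDeriv (a b K : ℝ) {C r p : ℝ} (hC : C ≠ 0) (hp0 : p ≠ 0)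
    (hp1 : 1 - p ≠ 0) :
    HasDerivAt (branchDeriv a b K C r)
      (K * (C * (p / (1 - p))) ^ r * (r * (r + 1) / (p * (1 - p) ^ 2))) p := by
  refine ((hasDerivAt_const p (a - b)).add
    (((hasDerivAt_rpow_odds (r := r) hC hp0 hp1).const_mul K).mul
    (((hasDerivAt_const p (r + 1)).sub (hasDerivAt_id' p)).div
      ((hasDerivAt_id' p).const_sub 1) hp1))).congr_deriv ?_
  simp only [Pi.sub_apply, Pi.div_apply]
  field_simp
  ring

lemma strictConvexOn_branch (a b : ℝ) {K C r : ℝ} (hK : 0 < K) (hC : 0 < C) (hr : 0 < r) :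
    StrictConvexOn ℝ (Ioo 0 1) (branch a b K C r) := by
  refine strictConvexOn_of_hasDerivAt2_pos isOpen_Ioo (convex_Ioo 0 1)
    (fun p hp => hasDerivAt_branch a b K hC.ne' hp.1.ne' (sub_pos.2 hp.2).ne')
    (fun p hp => hasDerivAt_branchDeriv a b K hC.ne' hp.1.ne' (sub_pos.2 hp.2).ne')
    fun p ⟨hp0, hp1⟩ => ?_
  have hq : 0 < 1 - p := sub_pos.2 hp1
  positivity

lemma branch_ode (u c K C : ℝ) {lam rho p : ℝ} (hlam : lam ≠ 0) (hrho : rho ≠ 0)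
    (hlr : lam + rho ≠ 0) (hp : 1 - p ≠ 0) :
    c + rho * branch (-(c / rho)) ((u * lam - c) / (lam + rho)) K C (rho / lam) p
      = lam * (1 - p) * (u - branch (-(c / rho)) ((u * lam - c) / (lam + rho)) K C (rho / lam) p)
        + lam * p * (1 - p)
          * branchDeriv (-(c / rho)) ((u * lam - c) / (lam + rho)) K C (rho / lam) p := by
  simp only [branch, branchDeriv]
  field_simp
  ring

lemma branch_inv_odds (a b K r : ℝ) {x : ℝ} (hx0 : x ≠ 0) (hx1 : 1 - x ≠ 0) :
    branch a b K ((1 - x) / x) r x = a * x + b * (1 - x) + K * x := by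
  rw [branch, div_mul_div_comm, mul_comm (1 - x), div_self (mul_ne_zero hx0 hx1),
    Real.one_rpow, mul_one]

lemma branchDeriv_inv_odds (a b K r : ℝ) {x : ℝ} (hx0 : x ≠ 0) (hx1 : 1 - x ≠ 0) :
    branchDeriv a b K ((1 - x) / x) r x = a - b + K * ((r + 1 - x) / (1 - x)) := by
  rw [branchDeriv, div_mul_div_comm, mul_comm (1 - x), div_self (mul_ne_zero hx0 hx1),
    Real.one_rpow, mul_one]

section LeftBranch

variable {urR ulR urL ulL lam rho c : ℝ}

lemma Vlopp_eq_branch :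
    Vlopp urR ulR urL ulL lam rho c
      = branch (-(c / rho)) ((ulL * lam - c) / (lam + rho))
          (lam / (rho * (2 * rho + lam)) * (lam * (urR * rho + c) / (lam + rho)))
          ((1 - pstar urR ulR urL ulL lam rho c) / pstar urR ulR urL ulL lam rho c) (rho / lam) :=
  rfl

lemma pstar_mem_Ioo (hA : 0 < urR * rho + c) (hB : 0 < ulL * rho + c) :
    pstar urR ulR urL ulL lam rho c ∈ Ioo 0 1 :=
  ⟨div_pos hB (by positivity), (div_lt_one (by positivity)).2 (by linarith)⟩

lemma one_sub_pstar (hS : (urR * rho + c) + (ulL * rho + c) ≠ 0) :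
    1 - pstar urR ulR urL ulL lam rho c
      = (urR * rho + c) / ((urR * rho + c) + (ulL * rho + c)) := by
  rw [pstar, eq_div_iff hS, sub_mul, one_mul, div_mul_cancel₀ _ hS]
  ring

lemma Vlopp_pstar (hlam : 0 < lam) (hrho : 0 < rho) (hA : 0 < urR * rho + c)
    (hB : 0 < ulL * rho + c) :
    Vlopp urR ulR urL ulL lam rho c (pstar urR ulR urL ulL lam rho c)
      = US urR ulR urL ulL lam rho c (pstar urR ulR urL ulL lam rho c) := by
  obtain ⟨h0, h1⟩ := pstar_mem_Ioo (ulR := ulR) (urL := urL) (lam := lam) hA hB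
  have hS : urR * rho + c + (ulL * rho + c) ≠ 0 := by positivity
  rw [Vlopp_eq_branch, branch_inv_odds _ _ _ _ h0.ne' (sub_pos.2 h1).ne', US, one_sub_pstar hS,
    pstar]
  -- `field_simp` recognizes these denominators as nonzero only once they are atoms
  generalize hSdef : urR * rho + c + (ulL * rho + c) = S at hS ⊢
  field_simp
  subst hSdef
  ring

lemma hasDerivAt_Vlopp_pstar (hlam : 0 < lam) (hrho : 0 < rho) (hA : 0 < urR * rho + c)
    (hB : 0 < ulL * rho + c) :
    HasDerivAt (Vlopp urR ulR urL ulL lam rho c) (lam * (urR - ulL) / (2 * rho + lam))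
      (pstar urR ulR urL ulL lam rho c) := by
  obtain ⟨h0, h1⟩ := pstar_mem_Ioo (ulR := ulR) (urL := urL) (lam := lam) hA hB
  rw [Vlopp_eq_branch]
  refine (hasDerivAt_branch _ _ _ (div_pos (sub_pos.2 h1) h0).ne' h0.ne'
    (sub_pos.2 h1).ne').congr_deriv ?_
  have hS : urR * rho + c + (ulL * rho + c) ≠ 0 := by positivity
  rw [branchDeriv_inv_odds _ _ _ _ h0.ne' (sub_pos.2 h1).ne', one_sub_pstar hS, pstar]
  have hA' := hA.ne'
  generalize hSdef : urR * rho + c + (ulL * rho + c) = S at hS ⊢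
  generalize hAdef : urR * rho + c = A at hA' ⊢
  field_simp
  subst hSdef hAdef
  ring

lemma Vlopp_ode (hlam : 0 < lam) (hrho : 0 < rho) (hA : 0 < urR * rho + c)
    (hB : 0 < ulL * rho + c) {p : ℝ} (hp : p ∈ Ioo 0 1) :
    DifferentiableAt ℝ (Vlopp urR ulR urL ulL lam rho c) p
      ∧ c + rho * Vlopp urR ulR urL ulL lam rho c p
          = lam * (1 - p) * (ulL - Vlopp urR ulR urL ulL lam rho c p)
            + lam * p * (1 - p) * deriv (Vlopp urR ulR urL ulL lam rho c) p := by
  obtain ⟨h0, h1⟩ := pstar_mem_Ioo (ulR := ulR) (urL := urL) (lam := lam) hA hB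
  have hd := hasDerivAt_branch (-(c / rho)) ((ulL * lam - c) / (lam + rho))
    (lam / (rho * (2 * rho + lam)) * (lam * (urR * rho + c) / (lam + rho)))
    (r := rho / lam) (div_pos (sub_pos.2 h1) h0).ne' hp.1.ne' (sub_pos.2 hp.2).ne'
  rw [Vlopp_eq_branch, hd.deriv]
  exact ⟨hd.differentiableAt,
    branch_ode _ _ _ _ hlam.ne' hrho.ne' (by positivity) (sub_pos.2 hp.2).ne'⟩

lemma strictConvexOn_Vlopp (hlam : 0 < lam) (hrho : 0 < rho) (hA : 0 < urR * rho + c)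
    (hB : 0 < ulL * rho + c) :
    StrictConvexOn ℝ (Ioo 0 1) (Vlopp urR ulR urL ulL lam rho c) := by
  obtain ⟨h0, h1⟩ := pstar_mem_Ioo (ulR := ulR) (urL := urL) (lam := lam) hA hB
  rw [Vlopp_eq_branch]
  exact strictConvexOn_branch _ _ (by positivity) (div_pos (sub_pos.2 h1) h0) (by positivity)

lemma US_lt_Vlopp (hlam : 0 < lam) (hrho : 0 < rho) (hA : 0 < urR * rho + c)
    (hB : 0 < ulL * rho + c) {p : ℝ} (hp : p ∈ Ico 0 (pstar urR ulR urL ulL lam rho c)) :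
    US urR ulR urL ulL lam rho c p < Vlopp urR ulR urL ulL lam rho c p := by
  obtain ⟨h0, h1⟩ := pstar_mem_Ioo (ulR := ulR) (urL := urL) (lam := lam) hA hB
  rcases hp.1.eq_or_lt with rfl | hp0
  · rw [show Vlopp urR ulR urL ulL lam rho c 0 = (ulL * lam - c) / (lam + rho) by simp [Vlopp],
      US, div_lt_div_iff₀ (by positivity) (by positivity)]
    nlinarith [mul_pos hlam hB]
  · have htangent := (strictConvexOn_Vlopp hlam hrho hA hB).add_mul_sub_lt_of_hasDerivAt
      ⟨hp0, hp.2.trans h1⟩ ⟨h0, h1⟩ hp.2.ne (hasDerivAt_Vlopp_pstar hlam hrho hA hB)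
    rw [Vlopp_pstar hlam hrho hA hB] at htangent
    convert htangent using 1
    simp only [US]
    field_simp
    ring

end LeftBranch

section Symmetry

variable {urR ulR urL ulL lam rho c : ℝ}

lemma pstar_swap (hS : (urR * rho + c) + (ulL * rho + c) ≠ 0) :
    pstar ulL urL ulR urR lam rho c = 1 - pstar urR ulR urL ulL lam rho c := by
  rw [one_sub_pstar hS, pstar, add_comm (ulL * rho + c)]

lemma US_swap (p : ℝ) :
    US ulL urL ulR urR lam rho c (1 - p) = US urR ulR urL ulL lam rho c p := by
  simp only [US]
  ring

lemma Vhopp_eq_Vlopp_swap (hS : (urR * rho + c) + (ulL * rho + c) ≠ 0) :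
    Vhopp urR ulR urL ulL lam rho c = fun p => Vlopp ulL urL ulR urR lam rho c (1 - p) := by
  funext p
  rw [Vhopp, Vlopp, pstar_swap hS, sub_sub_cancel, sub_sub_cancel]

lemma Vhopp_ode (hlam : 0 < lam) (hrho : 0 < rho) (hA : 0 < urR * rho + c)
    (hB : 0 < ulL * rho + c) {p : ℝ} (hp : p ∈ Ioo 0 1) :
    DifferentiableAt ℝ (Vhopp urR ulR urL ulL lam rho c) p
      ∧ c + rho * Vhopp urR ulR urL ulL lam rho c p
          = lam * p * (urR - Vhopp urR ulR urL ulL lam rho c p)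
            - lam * p * (1 - p) * deriv (Vhopp urR ulR urL ulL lam rho c) p := by
  obtain ⟨hd, hode⟩ := Vlopp_ode (ulR := urL) (urL := ulR) hlam hrho hB hA
    (p := 1 - p) ⟨sub_pos.2 hp.2, sub_lt_self 1 hp.1⟩
  rw [Vhopp_eq_Vlopp_swap (by positivity), deriv_comp_const_sub]
  exact ⟨differentiableAt_comp_const_sub.2 hd, by linear_combination hode⟩

lemma Vhopp_pstar (hlam : 0 < lam) (hrho : 0 < rho) (hA : 0 < urR * rho + c)
    (hB : 0 < ulL * rho + c) :
    Vhopp urR ulR urL ulL lam rho c (pstar urR ulR urL ulL lam rho c)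
      = US urR ulR urL ulL lam rho c (pstar urR ulR urL ulL lam rho c) := by
  rw [Vhopp_eq_Vlopp_swap (by positivity), ← US_swap]
  dsimp only
  rw [← pstar_swap (by positivity)]
  exact Vlopp_pstar hlam hrho hB hA

lemma hasDerivAt_Vhopp_pstar (hlam : 0 < lam) (hrho : 0 < rho) (hA : 0 < urR * rho + c)
    (hB : 0 < ulL * rho + c) :
    HasDerivAt (Vhopp urR ulR urL ulL lam rho c) (lam * (urR - ulL) / (2 * rho + lam))
      (pstar urR ulR urL ulL lam rho c) := by
  have hd := hasDerivAt_Vlopp_pstar (ulR := urL) (urL := ulR) hlam hrho hB hA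
  rw [pstar_swap (by positivity)] at hd
  rw [Vhopp_eq_Vlopp_swap (by positivity)]
  exact (hd.comp_const_sub 1 _).congr_deriv (by ring)

lemma strictConvexOn_Vhopp (hlam : 0 < lam) (hrho : 0 < rho) (hA : 0 < urR * rho + c)
    (hB : 0 < ulL * rho + c) :
    StrictConvexOn ℝ (Ioo 0 1) (Vhopp urR ulR urL ulL lam rho c) := by
  rw [Vhopp_eq_Vlopp_swap (by positivity)]
  exact (strictConvexOn_Vlopp hlam hrho hB hA).comp_one_sub

lemma US_lt_Vhopp (hlam : 0 < lam) (hrho : 0 < rho) (hA : 0 < urR * rho + c)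
    (hB : 0 < ulL * rho + c) {p : ℝ} (hp : p ∈ Ioc (pstar urR ulR urL ulL lam rho c) 1) :
    US urR ulR urL ulL lam rho c p < Vhopp urR ulR urL ulL lam rho c p := by
  rw [Vhopp_eq_Vlopp_swap (by positivity), ← US_swap]
  refine US_lt_Vlopp hlam hrho hB hA ⟨sub_nonneg.2 hp.2, ?_⟩
  rw [pstar_swap (by positivity)]
  linarith [hp.1]

end Symmetry

/-- Properties of the opposite-biased value: the branches solve (V_a0) and (V_a1) on
`(0,1)`, value matching and smooth pasting with `U^S` hold at `p*`, both branches are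
strictly convex on `(0,1)`, and the combined value strictly exceeds `U^S` off `p*`. -/
theorem Vopp_properties
    (urR ulR urL ulL lam rho c : ℝ)
    (h_urR : urR > max 0 ulR) (h_ulL : ulL > max 0 urL)
    (h_lam : 0 < lam) (h_rho : 0 < rho) (h_c : 0 ≤ c) :
    (∀ p ∈ Set.Ioo (0 : ℝ) 1,
      DifferentiableAt ℝ (Vlopp urR ulR urL ulL lam rho c) p
      ∧ c + rho * Vlopp urR ulR urL ulL lam rho c p
          = lam * (1 - p) * (ulL - Vlopp urR ulR urL ulL lam rho c p)
            + lam * p * (1 - p) * deriv (Vlopp urR ulR urL ulL lam rho c) p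
      ∧ DifferentiableAt ℝ (Vhopp urR ulR urL ulL lam rho c) p
      ∧ c + rho * Vhopp urR ulR urL ulL lam rho c p
          = lam * p * (urR - Vhopp urR ulR urL ulL lam rho c p)
            - lam * p * (1 - p) * deriv (Vhopp urR ulR urL ulL lam rho c) p)
    ∧ Vlopp urR ulR urL ulL lam rho c (pstar urR ulR urL ulL lam rho c)
        = US urR ulR urL ulL lam rho c (pstar urR ulR urL ulL lam rho c)
    ∧ Vhopp urR ulR urL ulL lam rho c (pstar urR ulR urL ulL lam rho c)
        = US urR ulR urL ulL lam rho c (pstar urR ulR urL ulL lam rho c)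
    ∧ deriv (Vlopp urR ulR urL ulL lam rho c) (pstar urR ulR urL ulL lam rho c)
        = lam * (urR - ulL) / (2 * rho + lam)
    ∧ deriv (Vhopp urR ulR urL ulL lam rho c) (pstar urR ulR urL ulL lam rho c)
        = lam * (urR - ulL) / (2 * rho + lam)
    ∧ StrictConvexOn ℝ (Set.Ioo (0 : ℝ) 1) (Vlopp urR ulR urL ulL lam rho c)
    ∧ StrictConvexOn ℝ (Set.Ioo (0 : ℝ) 1) (Vhopp urR ulR urL ulL lam rho c)
    ∧ ∀ p ∈ Set.Icc (0 : ℝ) 1, p ≠ pstar urR ulR urL ulL lam rho c →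
        US urR ulR urL ulL lam rho c p
          < (if p ≤ pstar urR ulR urL ulL lam rho c then
              Vlopp urR ulR urL ulL lam rho c p
            else Vhopp urR ulR urL ulL lam rho c p) := by
  have hA : 0 < urR * rho + c := by
    have := (le_max_left 0 ulR).trans_lt h_urR
    positivity
  have hB : 0 < ulL * rho + c := by
    have := (le_max_left 0 urL).trans_lt h_ulL
    positivity
  refine ⟨fun p hp => ⟨(Vlopp_ode h_lam h_rho hA hB hp).1, (Vlopp_ode h_lam h_rho hA hB hp).2,
      Vhopp_ode h_lam h_rho hA hB hp⟩,
    Vlopp_pstar h_lam h_rho hA hB, Vhopp_pstar h_lam h_rho hA hB,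
    (hasDerivAt_Vlopp_pstar h_lam h_rho hA hB).deriv,
    (hasDerivAt_Vhopp_pstar h_lam h_rho hA hB).deriv,
    strictConvexOn_Vlopp h_lam h_rho hA hB, strictConvexOn_Vhopp h_lam h_rho hA hB,
    fun p hp hne => ?_⟩
  split_ifs with hle
  · exact US_lt_Vlopp h_lam h_rho hA hB ⟨hp.1, hle.lt_of_ne hne⟩
  · exact US_lt_Vhopp h_lam h_rho hA hB ⟨not_le.1 hle, hp.2⟩
end
end

section
/- Comparative statics in the correct-action payoffs: assume ρ(u_ℓ^L − u_ℓ^R) + (u_r^R − u_ℓ^R)·λ > 0, ρ(u_r^R − u_r^L) + (u_ℓ^L − u_r^L)·λ > 0, 0 < p̲* < 1, and 0 < p̄* < 1. Then the partial derivative of p̲* with respect to u_r^R is strictly negative; the partial derivative of p̄* with respect to u_ℓ^L is strictly positive; and if ρ > 0 then additionally the partial derivative of p̄* with respect to u_r^R is strictly negative and the partial derivative of p̲* with respect to u_ℓ^L is strictly positive. -/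
/-! Both cutoffs are ratios of functions affine in each payoff, and the derivative of such a ratio
`f = N / D` is `(N' - D' f) / D`. Since `N' = D' = λ` (resp. `ρ`) for the own correct-action payoff
and `N' = 0` for the other one, the signs follow from `0 < p < 1` and `D > 0`. -/

set_option linter.unusedVariables false

noncomputable section

theorem deriv_affine_div_affine (a b c d x : ℝ) (hx : c * x + d ≠ 0) :
    deriv (fun t => (a * t + b) / (c * t + d)) x
      = (a - c * ((a * x + b) / (c * x + d))) / (c * x + d) := by
  have hnum : HasDerivAt (fun t => a * t + b) a x := by
    simpa using ((hasDerivAt_id x).const_mul a).add_const b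
  have hden : HasDerivAt (fun t => c * t + d) c x := by
    simpa using ((hasDerivAt_id x).const_mul c).add_const d
  refine (hnum.div hden hx).deriv.trans ?_
  field_simp

section

variable (urR ulR urL ulL lam rho c : ℝ)

theorem deriv_plowStar_urR (hD : rho * (ulL - ulR) + (urR - ulR) * lam ≠ 0) :
    deriv (fun x => plowStar x ulR urL ulL lam rho c) urR
      = -(lam * plowStar urR ulR urL ulL lam rho c) / (rho * (ulL - ulR) + (urR - ulR) * lam) := by
  have hf : (fun x => plowStar x ulR urL ulL lam rho c)
      = fun x => (0 * x + (ulL * rho + c)) / (lam * x + (rho * (ulL - ulR) - ulR * lam)) := by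
    funext x; unfold plowStar; ring
  have hden : lam * urR + (rho * (ulL - ulR) - ulR * lam)
      = rho * (ulL - ulR) + (urR - ulR) * lam := by ring
  rw [hf, deriv_affine_div_affine _ _ _ _ _ (hden ▸ hD), hden]
  unfold plowStar; ring

theorem deriv_plowStar_ulL (hD : rho * (ulL - ulR) + (urR - ulR) * lam ≠ 0) :
    deriv (fun y => plowStar urR ulR urL y lam rho c) ulL
      = rho * (1 - plowStar urR ulR urL ulL lam rho c) / (rho * (ulL - ulR) + (urR - ulR) * lam) := by
  have hf : (fun y => plowStar urR ulR urL y lam rho c)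
      = fun y => (rho * y + c) / (rho * y + ((urR - ulR) * lam - rho * ulR)) := by
    funext y; unfold plowStar; ring
  have hden : rho * ulL + ((urR - ulR) * lam - rho * ulR)
      = rho * (ulL - ulR) + (urR - ulR) * lam := by ring
  rw [hf, deriv_affine_div_affine _ _ _ _ _ (hden ▸ hD), hden]
  unfold plowStar; ring

theorem deriv_phighStar_urR (hD : rho * (urR - urL) + (ulL - urL) * lam ≠ 0) :
    deriv (fun x => phighStar x ulR urL ulL lam rho c) urR
      = -(rho * phighStar urR ulR urL ulL lam rho c) / (rho * (urR - urL) + (ulL - urL) * lam) := by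
  have hf : (fun x => phighStar x ulR urL ulL lam rho c)
      = fun x => (0 * x + ((ulL - urL) * lam - urL * rho - c))
          / (rho * x + ((ulL - urL) * lam - rho * urL)) := by
    funext x; unfold phighStar; ring
  have hden : rho * urR + ((ulL - urL) * lam - rho * urL)
      = rho * (urR - urL) + (ulL - urL) * lam := by ring
  rw [hf, deriv_affine_div_affine _ _ _ _ _ (hden ▸ hD), hden]
  unfold phighStar; ring

theorem deriv_phighStar_ulL (hD : rho * (urR - urL) + (ulL - urL) * lam ≠ 0) :
    deriv (fun y => phighStar urR ulR urL y lam rho c) ulL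
      = lam * (1 - phighStar urR ulR urL ulL lam rho c) / (rho * (urR - urL) + (ulL - urL) * lam) := by
  have hf : (fun y => phighStar urR ulR urL y lam rho c)
      = fun y => (lam * y + (-urL * lam - urL * rho - c))
          / (lam * y + (rho * (urR - urL) - urL * lam)) := by
    funext y; unfold phighStar; ring
  have hden : lam * ulL + (rho * (urR - urL) - urL * lam)
      = rho * (urR - urL) + (ulL - urL) * lam := by ring
  rw [hf, deriv_affine_div_affine _ _ _ _ _ (hden ▸ hD), hden]
  unfold phighStar; ring

end

theorem comparative_statics_correct_payoffs_general
    (urR ulR urL ulL lam rho c : ℝ)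
    (h_lam : 0 < lam)
    (h_den1 : 0 < rho * (ulL - ulR) + (urR - ulR) * lam)
    (h_den2 : 0 < rho * (urR - urL) + (ulL - urL) * lam)
    (h_plow : 0 < plowStar urR ulR urL ulL lam rho c
      ∧ plowStar urR ulR urL ulL lam rho c < 1)
    (h_phigh : 0 < phighStar urR ulR urL ulL lam rho c
      ∧ phighStar urR ulR urL ulL lam rho c < 1) :
    deriv (fun x : ℝ => plowStar x ulR urL ulL lam rho c) urR < 0
    ∧ 0 < deriv (fun y : ℝ => phighStar urR ulR urL y lam rho c) ulL
    ∧ (0 < rho →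
        deriv (fun x : ℝ => phighStar x ulR urL ulL lam rho c) urR < 0
        ∧ 0 < deriv (fun y : ℝ => plowStar urR ulR urL y lam rho c) ulL) := by
  rw [deriv_plowStar_urR _ _ _ _ _ _ _ h_den1.ne', deriv_phighStar_ulL _ _ _ _ _ _ _ h_den2.ne',
    deriv_phighStar_urR _ _ _ _ _ _ _ h_den2.ne', deriv_plowStar_ulL _ _ _ _ _ _ _ h_den1.ne']
  refine ⟨div_neg_of_neg_of_pos (neg_neg_of_pos (mul_pos h_lam h_plow.1)) h_den1,
    div_pos (mul_pos h_lam (sub_pos.2 h_phigh.2)) h_den2, fun h_rho => ⟨?_, ?_⟩⟩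
  · exact div_neg_of_neg_of_pos (neg_neg_of_pos (mul_pos h_rho h_phigh.1)) h_den2
  · exact div_pos (mul_pos h_rho (sub_pos.2 h_plow.2)) h_den1

/-- Comparative statics in the correct-action payoffs: `∂p̲*/∂u_r^R < 0`,
`∂p̄*/∂u_ℓ^L > 0`, and if `ρ > 0` also `∂p̄*/∂u_r^R < 0` and `∂p̲*/∂u_ℓ^L > 0`. -/
theorem comparative_statics_correct_payoffs
    (urR ulR urL ulL lam rho c : ℝ)
    (h_urR : urR > max 0 ulR) (h_ulL : ulL > max 0 urL)
    (h_lam : 0 < lam) (h_rho : 0 ≤ rho) (h_c : 0 ≤ c)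
    (h_nz : rho ≠ 0 ∨ c ≠ 0)
    (h_den1 : 0 < rho * (ulL - ulR) + (urR - ulR) * lam)
    (h_den2 : 0 < rho * (urR - urL) + (ulL - urL) * lam)
    (h_plow : 0 < plowStar urR ulR urL ulL lam rho c
      ∧ plowStar urR ulR urL ulL lam rho c < 1)
    (h_phigh : 0 < phighStar urR ulR urL ulL lam rho c
      ∧ phighStar urR ulR urL ulL lam rho c < 1) :
    deriv (fun x : ℝ => plowStar x ulR urL ulL lam rho c) urR < 0
    ∧ 0 < deriv (fun y : ℝ => phighStar urR ulR urL y lam rho c) ulL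
    ∧ (0 < rho →
        deriv (fun x : ℝ => phighStar x ulR urL ulL lam rho c) urR < 0
        ∧ 0 < deriv (fun y : ℝ => plowStar urR ulR urL y lam rho c) ulL) :=
  comparative_statics_correct_payoffs_general urR ulR urL ulL lam rho c h_lam h_den1 h_den2 h_plow
    h_phigh
end
end

section
/- Optimality of conclusive Poisson experiments (discrete-time foundation): let d ∈ (0,1), p ∈ (0,1), and let W : [0,1] → ℝ be convex on [0,1]. For a ∈ [d, 1] define the posteriors q_R(a) = p·(d + 1 − a)/(p·d + 1 − a) and q_L(a) = p·(a − d)/(a − p·d), and the expected continuation value G(a) = (p·d + 1 − a)·W(q_R(a)) + (a − p·d)·W(q_L(a)). Then for every a ∈ [d, 1], G(a) ≤ max{G(d), G(1)}; that is, the maximum of G over [d,1] is attained at a = d or at a = 1. -/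
/-!
Each of the two terms of `G a` is the perspective `t * W (x / t)` of `W` at a point `(x, t)`
depending affinely on `a`: `(p * (d + 1 - a), p * d + 1 - a)` for the R-signal and
`(p * (a - d), a - p * d)` for the L-signal. The perspective of a convex function is jointly
convex, so `G` is convex on `[d, 1]` and its maximum there is attained at an endpoint.
-/

open Set

section Perspective

variable {E : Type*} [AddCommGroup E] [Module ℝ E]

noncomputable def perspective (W : E → ℝ) (x : E × ℝ) : ℝ := x.2 * W (x.2⁻¹ • x.1)

def perspectiveDomain (s : Set E) : Set (E × ℝ) := {x | 0 < x.2 ∧ x.2⁻¹ • x.1 ∈ s}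

theorem convexOn_perspective {s : Set E} {W : E → ℝ} (hW : ConvexOn ℝ s W) :
    ConvexOn ℝ (perspectiveDomain s) (perspective W) := by
  have key : ∀ ⦃x : E × ℝ⦄, x ∈ perspectiveDomain s → ∀ ⦃y : E × ℝ⦄, y ∈ perspectiveDomain s →
      ∀ ⦃a b : ℝ⦄, 0 ≤ a → 0 ≤ b → a + b = 1 →
      a • x + b • y ∈ perspectiveDomain s ∧
      perspective W (a • x + b • y) ≤ a • perspective W x + b • perspective W y := by
    rintro ⟨u₁, v₁⟩ ⟨hv₁, hx⟩ ⟨u₂, v₂⟩ ⟨hv₂, hy⟩ a b ha hb hab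
    simp only [perspectiveDomain, perspective, Prod.smul_mk, Prod.mk_add_mk, smul_eq_mul,
      mem_ofPred_eq] at hx hy ⊢
    have hV : 0 < a * v₁ + b * v₂ := by
      rcases ha.lt_or_eq with ha | rfl
      · positivity
      · simp_all
    set V := a * v₁ + b * v₂
    have hα : 0 ≤ a * v₁ / V := by positivity
    have hβ : 0 ≤ b * v₂ / V := by positivity
    have hαβ : a * v₁ / V + b * v₂ / V = 1 := by rw [← add_div, div_self hV.ne']
    have hcomb : V⁻¹ • (a • u₁ + b • u₂) =
        (a * v₁ / V) • (v₁⁻¹ • u₁) + (b * v₂ / V) • (v₂⁻¹ • u₂) := by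
      simp only [smul_smul, smul_add]
      congr 2 <;> field_simp
    refine ⟨⟨hV, hcomb ▸ hW.1 hx hy hα hβ hαβ⟩, ?_⟩
    calc V * W (V⁻¹ • (a • u₁ + b • u₂))
        ≤ V * ((a * v₁ / V) * W (v₁⁻¹ • u₁) + (b * v₂ / V) * W (v₂⁻¹ • u₂)) := by
          rw [hcomb]; gcongr; exact hW.2 hx hy hα hβ hαβ
      _ = a * (v₁ * W (v₁⁻¹ • u₁)) + b * (v₂ * W (v₂⁻¹ • u₂)) := by field_simp
  exact ⟨fun x hx y hy a b ha hb hab => (key hx hy ha hb hab).1,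
    fun x hx y hy a b ha hb hab => (key hx hy ha hb hab).2⟩

end Perspective

theorem mk_mem_perspectiveDomain_Icc {u v : ℝ} (hu : 0 ≤ u) (huv : u ≤ v) (hv : 0 < v) :
    (u, v) ∈ perspectiveDomain (Icc (0 : ℝ) 1) := by
  refine ⟨hv, ?_⟩
  rw [smul_eq_mul, ← div_eq_inv_mul]
  exact ⟨div_nonneg hu hv.le, div_le_one_of_le₀ huv hv.le⟩

/-- Optimality of conclusive Poisson experiments: for a convex continuation value `W`,
the expected continuation value `G(a)` of the binary experiment with `L`-signal
probability `a` (and `R`-signal probability `b = 1 + d − a`) is maximized over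
`a ∈ [d, 1]` at one of the extreme (conclusive) experiments `a = d` or `a = 1`. -/
theorem conclusive_experiments_optimal
    (d p : ℝ) (hd : d ∈ Set.Ioo (0 : ℝ) 1) (hp : p ∈ Set.Ioo (0 : ℝ) 1)
    (W : ℝ → ℝ) (hW : ConvexOn ℝ (Set.Icc (0 : ℝ) 1) W)
    (qR qL G : ℝ → ℝ)
    (hqR : ∀ a, qR a = p * (d + 1 - a) / (p * d + 1 - a))
    (hqL : ∀ a, qL a = p * (a - d) / (a - p * d))
    (hG : ∀ a, G a = (p * d + 1 - a) * W (qR a) + (a - p * d) * W (qL a)) :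
    ∀ a ∈ Set.Icc d 1, G a ≤ max (G d) (G 1) := by
  obtain ⟨hd0, hd1⟩ := hd
  obtain ⟨hp0, hp1⟩ := hp
  let gR : ℝ →ᵃ[ℝ] ℝ × ℝ := AffineMap.lineMap (p * (d + 1), p * d + 1) (p * d, p * d)
  let gL : ℝ →ᵃ[ℝ] ℝ × ℝ := AffineMap.lineMap (-(p * d), -(p * d)) (p * (1 - d), 1 - p * d)
  have hgR (a : ℝ) : gR a = (p * (d + 1 - a), p * d + 1 - a) := by
    simp only [gR, AffineMap.lineMap_apply_module, Prod.smul_mk, Prod.mk_add_mk, smul_eq_mul]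
    congr 1 <;> ring
  have hgL (a : ℝ) : gL a = (p * (a - d), a - p * d) := by
    simp only [gL, AffineMap.lineMap_apply_module, Prod.smul_mk, Prod.mk_add_mk, smul_eq_mul]
    congr 1 <;> ring
  have hR : Icc d 1 ⊆ gR ⁻¹' perspectiveDomain (Icc 0 1) := fun a ⟨had, ha1⟩ => by
    rw [mem_preimage, hgR]
    exact mk_mem_perspectiveDomain_Icc (by nlinarith) (by nlinarith) (by nlinarith)
  have hL : Icc d 1 ⊆ gL ⁻¹' perspectiveDomain (Icc 0 1) := fun a ⟨had, ha1⟩ => by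
    rw [mem_preimage, hgL]
    exact mk_mem_perspectiveDomain_Icc (by nlinarith) (by nlinarith) (by nlinarith)
  have hGconv : ConvexOn ℝ (Icc d 1) G := by
    refine ((((convexOn_perspective hW).comp_affineMap gR).subset hR (convex_Icc d 1)).add
      (((convexOn_perspective hW).comp_affineMap gL).subset hL (convex_Icc d 1))).congr ?_
    intro a _
    simp only [Pi.add_apply, Function.comp_apply, hgR, hgL, perspective, smul_eq_mul, hG, hqR,
      hqL, div_eq_inv_mul]
  intro a ha
  exact hGconv.le_on_segment (left_mem_Icc.2 hd1.le) (right_mem_Icc.2 hd1.le)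
    (by rwa [segment_eq_Icc hd1.le])
end

section
/- Upper bound on the payoff of any strategy: let p₀ ∈ [0,1], T ≥ 0, and let α : ℝ → ℝ be a measurable function with α(t) ∈ [0,1] for all t. Let p : ℝ → ℝ be differentiable with p(0) = p₀ and p′(t) = −λ·(2α(t) − 1)·p(t)·(1 − p(t)) for all t ∈ [0,T], and define P(t) = p₀·exp(−λ·∫₀ᵗ α(s) ds) + (1 − p₀)·exp(−λ·∫₀ᵗ (1 − α(s)) ds). Then ∫₀ᵀ e^{−ρt}·P(t)·(λ·α(t)·p(t)·u_r^R + λ·(1 − α(t))·(1 − p(t))·u_ℓ^L − c) dt + e^{−ρT}·P(T)·U(p(T)) ≤ max{U(p₀), U^FA(p₀)}. -/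
set_option linter.unusedVariables false

noncomputable section

/-!
Put `x = e^{-ρt} P p` and `y = e^{-ρt} P (1 - p)`, the discounted probabilities of
"state R, no breakthrough yet" and "state L, no breakthrough yet". The ODE for `p` is
Bayes' rule, so `x = p₀ e^{-∫(ρ+λα)}` and `y = (1-p₀) e^{-∫(ρ+λ(1-α))}`: absolutely
continuous, with `x' = -(ρ+λα) x` and `y' = -(ρ+λ(1-α)) y` almost everywhere.
In these coordinates every candidate continuation value is linear: stopping with `r` is
worth `u_r^R x + u_r^L y`, stopping with `ℓ` is worth `u_ℓ^R x + u_ℓ^L y`, and switching to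
full attention is worth `((λu_r^R - c) x + (λu_ℓ^L - c) y) / (ρ+λ)`. Add the payoff accrued
so far: the full-attention candidate is then nonincreasing whatever `α` does, and each
stopping candidate is nonincreasing as long as it exceeds the full-attention one. Looking at
the last time before `T` at which a stopping candidate is below the full-attention one
bounds its terminal value by the larger of its own initial value and the initial
full-attention value.
-/

open MeasureTheory Set Filter
open scoped NNReal

theorem abs_le_one_of_mem_Icc {a : ℝ} (ha : a ∈ Icc (0 : ℝ) 1) : |a| ≤ 1 :=
  abs_le.2 ⟨by linarith [ha.1], ha.2⟩

theorem one_sub_mem_Icc {a : ℝ} (ha : a ∈ Icc (0 : ℝ) 1) : 1 - a ∈ Icc (0 : ℝ) 1 :=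
  ⟨sub_nonneg.2 ha.2, sub_le_self _ ha.1⟩

theorem intervalIntegrable_of_abs_le {g : ℝ → ℝ} {K : ℝ} (hg : Measurable g)
    (hK : ∀ t, |g t| ≤ K) (a b : ℝ) : IntervalIntegrable g volume a b :=
  intervalIntegrable_const.mono_fun' hg.aestronglyMeasurable (ae_of_all _ hK)

theorem lipschitzWith_integral_of_abs_le {g : ℝ → ℝ} {K : ℝ≥0} (hg : Measurable g)
    (hK : ∀ t, |g t| ≤ K) : LipschitzWith K fun t => ∫ s in (0 : ℝ)..t, g s := by
  refine LipschitzWith.of_dist_le_mul fun t u => ?_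
  have hint := intervalIntegrable_of_abs_le hg hK
  rw [Real.dist_eq, intervalIntegral.integral_interval_sub_left (hint 0 t) (hint 0 u),
    Real.dist_eq]
  simpa only [Real.norm_eq_abs] using intervalIntegral.norm_integral_le_of_norm_le_const
    fun s _ => (Real.norm_eq_abs (g s)).trans_le (hK s)

theorem lipschitzOnWith_exp_Iic_zero : LipschitzOnWith 1 Real.exp (Iic 0) := by
  refine (convex_Iic 0).lipschitzOnWith_of_nnnorm_deriv_le
    (fun x _ => Real.differentiableAt_exp) fun x hx => ?_
  rw [Real.deriv_exp, ← NNReal.coe_le_coe, coe_nnnorm, Real.norm_eq_abs,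
    abs_of_pos (Real.exp_pos x), NNReal.coe_one]
  exact Real.exp_le_one_iff.2 hx

namespace AbsolutelyContinuousOnInterval

theorem le_of_ae_hasDerivAt_nonpos {f : ℝ → ℝ} {a b : ℝ}
    (hf : AbsolutelyContinuousOnInterval f a b) (hab : a ≤ b)
    (hf' : ∀ᵐ t, t ∈ Ioc a b → ∃ d ≤ 0, HasDerivAt f d t) : f b ≤ f a := by
  rw [← sub_nonpos, ← hf.integral_deriv_eq_sub, intervalIntegral.integral_of_le hab]
  refine setIntegral_nonpos_ae measurableSet_Ioc ?_
  filter_upwards [hf'] with t ht htab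
  obtain ⟨d, hd, hderiv⟩ := ht htab
  rwa [hderiv.deriv]

/-- Grönwall-type uniqueness, through `(e^{-2Ct} f²)' = 2 e^{-2Ct} f² (k - C) ≤ 0`. -/
theorem eqOn_zero_of_ae_hasDerivAt_mul {f k : ℝ → ℝ} {a b C : ℝ}
    (hf : AbsolutelyContinuousOnInterval f a b) (ha : f a = 0)
    (hk : ∀ t ∈ Icc a b, k t ≤ C)
    (hf' : ∀ᵐ t, t ∈ Icc a b → HasDerivAt f (k t * f t) t) :
    EqOn f 0 (Icc a b) := by
  intro t ht
  set h : ℝ → ℝ := fun s => Real.exp (-(2 * C) * s) * (f s * f s)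
  have hsub : uIcc a t ⊆ uIcc a b := uIcc_subset_uIcc_left (Icc_subset_uIcc ht)
  have hac : AbsolutelyContinuousOnInterval h a t := by
    have hexp : ContDiff ℝ 1 fun s : ℝ => Real.exp (-(2 * C) * s) := by fun_prop
    exact hexp.contDiffOn.absolutelyContinuousOnInterval.fun_mul
      ((hf.mono hsub).fun_mul (hf.mono hsub))
  have hle : h t ≤ h a := by
    refine hac.le_of_ae_hasDerivAt_nonpos ht.1 ?_
    filter_upwards [hf'] with s hs hsat
    have hsab : s ∈ Icc a b := ⟨hsat.1.le, hsat.2.trans ht.2⟩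
    have hexp : HasDerivAt (fun s : ℝ => Real.exp (-(2 * C) * s))
        (Real.exp (-(2 * C) * s) * -(2 * C)) s := by
      simpa using ((hasDerivAt_id s).const_mul (-(2 * C))).exp
    refine ⟨_, ?_, hexp.mul ((hs hsab).mul (hs hsab))⟩
    have : 0 ≤ Real.exp (-(2 * C) * s) * (f s * f s) * (C - k s) :=
      mul_nonneg (mul_nonneg (Real.exp_pos _).le (mul_self_nonneg _))
        (sub_nonneg.2 (hk s hsab))
    linarith
  have : f t * f t ≤ 0 := by
    have := Real.exp_pos (-(2 * C) * t)
    simp only [h, ha, mul_zero] at hle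
    nlinarith [mul_self_nonneg (f t)]
  simpa using mul_self_eq_zero.1 (le_antisymm this (mul_self_nonneg _))

end AbsolutelyContinuousOnInterval

theorem absolutelyContinuousOnInterval_of_abs_deriv_le {f : ℝ → ℝ} {a b C : ℝ}
    (hf : ∀ t ∈ uIcc a b, DifferentiableAt ℝ f t)
    (hC : ∀ t ∈ uIcc a b, |deriv f t| ≤ C) :
    AbsolutelyContinuousOnInterval f a b := by
  refine ((convex_uIcc a b).lipschitzOnWith_of_nnnorm_deriv_le (C := C.toNNReal) hf
    fun t ht => ?_).absolutelyContinuousOnInterval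
  rw [← NNReal.coe_le_coe, coe_nnnorm, Real.norm_eq_abs]
  exact (hC t ht).trans (Real.le_coe_toNNReal C)

theorem le_max_of_antitoneOn_of_lt {f g : ℝ → ℝ} {a b : ℝ} (hab : a ≤ b)
    (hf : ContinuousOn f (Icc a b)) (hg : ContinuousOn g (Icc a b))
    (hg_anti : AntitoneOn g (Icc a b))
    (hf_anti : ∀ s u, a ≤ s → s ≤ u → u ≤ b → (∀ t ∈ Ioc s u, g t < f t) →
      f u ≤ f s) :
    f b ≤ max (f a) (g a) := by
  set S := Icc a b ∩ (f - g) ⁻¹' Iic 0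
  rcases S.eq_empty_or_nonempty with hS | hS
  · refine le_max_of_le_left (hf_anti a b le_rfl hab le_rfl fun t ht => ?_)
    by_contra hle
    have : t ∈ S := ⟨Ioc_subset_Icc_self ht, sub_nonpos.2 (not_lt.1 hle)⟩
    simp [hS] at this
  · have hSbdd : BddAbove S := bddAbove_Icc.mono inter_subset_left
    obtain ⟨⟨has, hsb⟩, hfg⟩ : sSup S ∈ S :=
      ((hf.sub hg).preimage_isClosed_of_isClosed isClosed_Icc isClosed_Iic).csSup_mem hS hSbdd
    refine le_max_of_le_right ?_
    calc f b ≤ f (sSup S) := hf_anti _ b has hsb le_rfl fun t ht => by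
          by_contra hle
          have : t ∈ S := ⟨⟨has.trans ht.1.le, ht.2⟩, sub_nonpos.2 (not_lt.1 hle)⟩
          exact (le_csSup hSbdd this).not_gt ht.1
      _ ≤ g (sSup S) := sub_nonpos.1 hfg
      _ ≤ g a := hg_anti ⟨le_rfl, hab⟩ ⟨has, hsb⟩ has

def survival (g : ℝ → ℝ) (t : ℝ) : ℝ := Real.exp (-∫ s in (0 : ℝ)..t, g s)

structure DecaysAtRate (r x : ℝ → ℝ) (T : ℝ) : Prop where
  absCont : AbsolutelyContinuousOnInterval x 0 T
  nonneg : ∀ t ∈ Icc 0 T, 0 ≤ x t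
  hasDerivAt : ∀ᵐ t, t ∈ Icc 0 T → HasDerivAt x (-r t * x t) t

theorem DecaysAtRate.const_mul {r x : ℝ → ℝ} {T : ℝ} (hx : DecaysAtRate r x T) {c : ℝ}
    (hc : 0 ≤ c) : DecaysAtRate r (fun t => c * x t) T where
  absCont := hx.absCont.const_mul c
  nonneg t ht := mul_nonneg hc (hx.nonneg t ht)
  hasDerivAt := by
    filter_upwards [hx.hasDerivAt] with t ht htT
    exact ((ht htT).const_mul c).congr_deriv (by ring)

section Survival

variable {g : ℝ → ℝ}

@[simp]
theorem survival_zero : survival g 0 = 1 := by simp [survival]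

theorem survival_pos (t : ℝ) : 0 < survival g t := Real.exp_pos _

theorem exp_neg_mul_integral_eq_survival (c t : ℝ) :
    Real.exp (-c * ∫ s in (0 : ℝ)..t, g s) = survival (fun s => c * g s) t := by
  rw [survival, intervalIntegral.integral_const_mul, neg_mul]

theorem exp_mul_survival {t : ℝ} (hg : IntervalIntegrable g volume 0 t) (r : ℝ) :
    Real.exp (-r * t) * survival g t = survival (fun s => r + g s) t := by
  rw [survival, survival, ← Real.exp_add,
    intervalIntegral.integral_add intervalIntegrable_const hg, intervalIntegral.integral_const,
    smul_eq_mul, sub_zero]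
  ring_nf

theorem hasDerivAt_survival {t : ℝ}
    (h : HasDerivAt (fun u => ∫ s in (0 : ℝ)..u, g s) (g t) t) :
    HasDerivAt (survival g) (-g t * survival g t) t :=
  (show HasDerivAt (fun u => Real.exp (-∫ s in (0 : ℝ)..u, g s)) _ t from h.neg.exp).congr_deriv
    (mul_comm _ _)

theorem decaysAtRate_survival {K T : ℝ} (hg : Measurable g) (hg0 : ∀ t, 0 ≤ g t)
    (hgK : ∀ t, g t ≤ K) (hT : 0 ≤ T) : DecaysAtRate g (survival g) T where
  absCont := by
    have hG := lipschitzWith_integral_of_abs_le hg fun t =>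
      (abs_of_nonneg (hg0 t)).trans_le ((hgK t).trans (Real.le_coe_toNNReal K))
    have hmaps : MapsTo (fun t => -∫ s in (0 : ℝ)..t, g s) (Ici 0) (Iic 0) := fun t ht =>
      neg_nonpos.2 (intervalIntegral.integral_nonneg ht fun s _ => hg0 s)
    refine ((lipschitzOnWith_exp_Iic_zero.comp hG.neg.lipschitzOnWith hmaps).mono
      ?_).absolutelyContinuousOnInterval
    rw [uIcc_of_le hT]
    exact Icc_subset_Ici_self
  nonneg t _ := (survival_pos t).le
  hasDerivAt := by
    have hint : IntervalIntegrable g volume 0 T :=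
      intervalIntegrable_of_abs_le hg (fun t => (abs_of_nonneg (hg0 t)).trans_le (hgK t)) 0 T
    filter_upwards [hint.ae_hasDerivAt_integral] with t ht htT
    exact hasDerivAt_survival (ht (Icc_subset_uIcc htT) 0 left_mem_uIcc)

end Survival

section Belief

variable {lam p0 T : ℝ} {α p : ℝ → ℝ}

theorem decaysAtRate_survival_add_mul (hlam : 0 ≤ lam) {rho : ℝ} (hrho : 0 ≤ rho)
    (hα_meas : Measurable α) (hα : ∀ t, α t ∈ Icc (0 : ℝ) 1) (hT : 0 ≤ T) :
    DecaysAtRate (fun t => rho + lam * α t) (survival fun s => rho + lam * α s) T :=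
  decaysAtRate_survival (K := rho + lam) (measurable_const.add (hα_meas.const_mul lam))
    (fun t => add_nonneg hrho (mul_nonneg hlam (hα t).1))
    (fun t => (add_le_add_iff_left rho).2 (mul_le_of_le_one_right hlam (hα t).2)) hT

/-- Bayes' rule along the ODE: with `W = e^{-λ∫α}` and `V = e^{-λ∫(1-α)}`, the gap
`δ = p (p₀ W + (1-p₀) V) - p₀ W` satisfies `δ' = λ (p (2α-1) - α) δ`, `δ(0) = 0`. -/
theorem belief_mul_eq_of_ode (hlam : 0 ≤ lam) (hα_meas : Measurable α)
    (hα : ∀ t, α t ∈ Icc (0 : ℝ) 1) (hp_diff : Differentiable ℝ p) (hp_init : p 0 = p0)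
    (hp_ode : ∀ t ∈ Icc (0 : ℝ) T, deriv p t = -lam * (2 * α t - 1) * p t * (1 - p t)) :
    ∀ t ∈ Icc (0 : ℝ) T,
      p t * (p0 * survival (fun s => lam * α s) t
          + (1 - p0) * survival (fun s => lam * (1 - α s)) t)
        = p0 * survival (fun s => lam * α s) t := by
  intro t ht
  have hT : 0 ≤ T := ht.1.trans ht.2
  have hW := decaysAtRate_survival (K := lam) (hα_meas.const_mul lam)
    (fun s => mul_nonneg hlam (hα s).1) (fun s => mul_le_of_le_one_right hlam (hα s).2) hT
  have hV := decaysAtRate_survival (g := fun s => lam * (1 - α s)) (K := lam)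
    ((measurable_const.sub hα_meas).const_mul lam)
    (fun s => mul_nonneg hlam (one_sub_mem_Icc (hα s)).1)
    (fun s => mul_le_of_le_one_right hlam (one_sub_mem_Icc (hα s)).2) hT
  obtain ⟨M, hM⟩ := (isCompact_Icc (a := (0 : ℝ)) (b := T)).exists_bound_of_continuousOn
    hp_diff.continuous.continuousOn
  simp only [Real.norm_eq_abs] at hM
  have hpac : AbsolutelyContinuousOnInterval p 0 T := by
    refine absolutelyContinuousOnInterval_of_abs_deriv_le (C := lam * (1 * (M * (1 + M))))
      (fun s _ => hp_diff s) fun s hs => ?_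
    rw [uIcc_of_le hT] at hs
    have hpM := hM s hs
    rw [hp_ode s hs, mul_assoc, mul_assoc, abs_mul, abs_neg, abs_of_nonneg hlam, abs_mul,
      abs_mul]
    have h2α : |2 * α s - 1| ≤ 1 :=
      abs_le.2 ⟨by linarith [(hα s).1], by linarith [(hα s).2]⟩
    have h1p : |1 - p s| ≤ 1 + M := (abs_sub (1 : ℝ) (p s)).trans (by rw [abs_one]; linarith)
    have hM0 : 0 ≤ M := (abs_nonneg _).trans hpM
    gcongr
  refine sub_eq_zero.1 (AbsolutelyContinuousOnInterval.eqOn_zero_of_ae_hasDerivAt_mul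
    (k := fun s => lam * (p s * (2 * α s - 1) - α s)) (C := lam * M)
    ((hpac.fun_mul ((hW.absCont.const_mul p0).fun_add (hV.absCont.const_mul (1 - p0)))).fun_sub
      (hW.absCont.const_mul p0)) (by simp [hp_init]) (fun s hs => ?_) ?_ ht)
  · have hps := abs_le.1 (hM s hs)
    have := (hα s).1
    have := (hα s).2
    gcongr
    nlinarith
  · filter_upwards [hW.hasDerivAt, hV.hasDerivAt] with s hWs hVs hs
    have hps := (hp_diff s).hasDerivAt
    rw [hp_ode s hs] at hps
    exact ((hps.mul (((hWs hs).const_mul p0).add ((hVs hs).const_mul (1 - p0)))).sub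
      ((hWs hs).const_mul p0)).congr_deriv (by simp only [Pi.add_apply]; ring)

variable {rho : ℝ} {P : ℝ → ℝ}

theorem discounted_mul_belief_eq (hlam : 0 ≤ lam) (hα_meas : Measurable α)
    (hα : ∀ t, α t ∈ Icc (0 : ℝ) 1) (hp_diff : Differentiable ℝ p) (hp_init : p 0 = p0)
    (hp_ode : ∀ t ∈ Icc (0 : ℝ) T, deriv p t = -lam * (2 * α t - 1) * p t * (1 - p t))
    (hP : ∀ t, P t = p0 * Real.exp (-lam * ∫ s in (0 : ℝ)..t, α s)
      + (1 - p0) * Real.exp (-lam * ∫ s in (0 : ℝ)..t, (1 - α s)))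
    {t : ℝ} (ht : t ∈ Icc (0 : ℝ) T) :
    Real.exp (-rho * t) * P t * p t = p0 * survival (fun s => rho + lam * α s) t ∧
      Real.exp (-rho * t) * P t * (1 - p t)
        = (1 - p0) * survival (fun s => rho + lam * (1 - α s)) t := by
  have hbayes := belief_mul_eq_of_ode hlam hα_meas hα hp_diff hp_init hp_ode t ht
  have hint : ∀ f : ℝ → ℝ, Measurable f → (∀ s, |f s| ≤ 1) →
      IntervalIntegrable (fun s => lam * f s) volume 0 t := fun f hf hf1 =>
    (intervalIntegrable_of_abs_le hf hf1 0 t).const_mul lam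
  rw [hP, exp_neg_mul_integral_eq_survival, exp_neg_mul_integral_eq_survival,
    ← exp_mul_survival (hint α hα_meas fun s => abs_le_one_of_mem_Icc (hα s)),
    ← exp_mul_survival (hint (fun s => 1 - α s) (measurable_const.sub hα_meas)
      fun s => abs_le_one_of_mem_Icc (one_sub_mem_Icc (hα s)))]
  exact ⟨by linear_combination Real.exp (-rho * t) * hbayes,
    by linear_combination -Real.exp (-rho * t) * hbayes⟩

end Belief

section Lyapunov

variable {urR ulL lam rho c T : ℝ} {α x y : ℝ → ℝ}

def flowPayoff (urR ulL lam c : ℝ) (α x y : ℝ → ℝ) (t : ℝ) : ℝ :=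
  lam * α t * urR * x t + lam * (1 - α t) * ulL * y t - c * (x t + y t)

/-- The payoff of following `α` up to time `t`, then collecting `A` in state `R` and `B` in
state `L`. -/
def stoppedPayoff (urR ulL lam c : ℝ) (α x y : ℝ → ℝ) (A B t : ℝ) : ℝ :=
  (∫ s in (0 : ℝ)..t, flowPayoff urR ulL lam c α x y s) + A * x t + B * y t

/-- The drift is affine in the attention `a`, and nonpositive at both `a = 0` and `a = 1`. -/
theorem flowPayoff_add_drift_nonpos {A B x y a : ℝ} (hrl : 0 < rho + lam) (hlam : 0 ≤ lam)
    (hA : A ≤ urR) (hB : B ≤ ulL) (hx : 0 ≤ x) (hy : 0 ≤ y) (ha : a ∈ Icc (0 : ℝ) 1)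
    (hdom : (lam * urR - c) / (rho + lam) * x + (lam * ulL - c) / (rho + lam) * y
      ≤ A * x + B * y) :
    lam * a * urR * x + lam * (1 - a) * ulL * y - c * (x + y)
      + A * (-(rho + lam * a) * x) + B * (-(rho + lam * (1 - a)) * y) ≤ 0 := by
  have hdom' : (lam * urR - c) * x + (lam * ulL - c) * y ≤ (rho + lam) * (A * x + B * y) := by
    have := mul_le_mul_of_nonneg_left hdom hrl.le
    rwa [show (rho + lam) * ((lam * urR - c) / (rho + lam) * x
      + (lam * ulL - c) / (rho + lam) * y) = (lam * urR - c) * x + (lam * ulL - c) * y by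
      field_simp] at this
  nlinarith [mul_nonneg ha.1 (mul_nonneg (mul_nonneg hlam (sub_nonneg.2 hB)) hy),
    mul_nonneg (sub_nonneg.2 ha.2) (mul_nonneg (mul_nonneg hlam (sub_nonneg.2 hA)) hx)]

theorem intervalIntegrable_flowPayoff {a b : ℝ} (hα_meas : Measurable α)
    (hα : ∀ t, α t ∈ Icc (0 : ℝ) 1) (hx : ContinuousOn x (uIcc a b))
    (hy : ContinuousOn y (uIcc a b)) :
    IntervalIntegrable (flowPayoff urR ulL lam c α x y) volume a b := by
  have hαi : IntervalIntegrable α volume a b :=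
    intervalIntegrable_of_abs_le hα_meas (fun t => abs_le_one_of_mem_Icc (hα t)) a b
  have h1αi : IntervalIntegrable (fun t => 1 - α t) volume a b :=
    intervalIntegrable_const.sub hαi
  exact ((((hαi.const_mul lam).mul_const urR).mul_continuousOn hx).add
    (((h1αi.const_mul lam).mul_const ulL).mul_continuousOn hy)).sub
    ((hx.add hy).const_smul c).intervalIntegrable

theorem absolutelyContinuousOnInterval_stoppedPayoff (hα_meas : Measurable α)
    (hα : ∀ t, α t ∈ Icc (0 : ℝ) 1) (hx : AbsolutelyContinuousOnInterval x 0 T)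
    (hy : AbsolutelyContinuousOnInterval y 0 T) (A B : ℝ) :
    AbsolutelyContinuousOnInterval (stoppedPayoff urR ulL lam c α x y A B) 0 T :=
  (((intervalIntegrable_flowPayoff hα_meas hα hx.continuousOn
    hy.continuousOn).absolutelyContinuousOnInterval_intervalIntegral left_mem_uIcc).fun_add
    (hx.const_mul A)).fun_add (hy.const_mul B)

variable (hα_meas : Measurable α) (hα : ∀ t, α t ∈ Icc (0 : ℝ) 1)
  (hx : DecaysAtRate (fun t => rho + lam * α t) x T)
  (hy : DecaysAtRate (fun t => rho + lam * (1 - α t)) y T)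
include hα_meas hα hx hy

theorem stoppedPayoff_le (hrl : 0 < rho + lam) (hlam : 0 ≤ lam) {A B s u : ℝ} (hA : A ≤ urR)
    (hB : B ≤ ulL) (hs : 0 ≤ s) (hsu : s ≤ u) (hu : u ≤ T)
    (hdom : ∀ t ∈ Ioc s u, (lam * urR - c) / (rho + lam) * x t
      + (lam * ulL - c) / (rho + lam) * y t ≤ A * x t + B * y t) :
    stoppedPayoff urR ulL lam c α x y A B u ≤ stoppedPayoff urR ulL lam c α x y A B s := by
  refine ((absolutelyContinuousOnInterval_stoppedPayoff hα_meas hα hx.absCont hy.absCont A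
    B).mono (uIcc_subset_uIcc ?_ ?_)).le_of_ae_hasDerivAt_nonpos hsu ?_
  · exact Icc_subset_uIcc ⟨hs, hsu.trans hu⟩
  · exact Icc_subset_uIcc ⟨hs.trans hsu, hu⟩
  filter_upwards [(intervalIntegrable_flowPayoff (urR := urR) (ulL := ulL) (lam := lam) (c := c)
    hα_meas hα hx.absCont.continuousOn hy.absCont.continuousOn).ae_hasDerivAt_integral,
    hx.hasDerivAt, hy.hasDerivAt] with t hF hxt hyt ht
  have htT : t ∈ Icc 0 T := ⟨hs.trans ht.1.le, ht.2.trans hu⟩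
  exact ⟨_, flowPayoff_add_drift_nonpos hrl hlam hA hB (hx.nonneg t htT) (hy.nonneg t htT)
    (hα t) (hdom t ht), ((hF (Icc_subset_uIcc htT) 0 left_mem_uIcc).add
      ((hxt htT).const_mul A)).add ((hyt htT).const_mul B)⟩

theorem integral_flowPayoff_add_max_le {ulR urL : ℝ} (hlam : 0 < lam) (hrho : 0 ≤ rho)
    (hc : 0 ≤ c) (hurR : 0 ≤ urR) (hulL : 0 ≤ ulL) (hulR : ulR ≤ urR) (hurL : urL ≤ ulL)
    (hT : 0 ≤ T) :
    (∫ t in (0 : ℝ)..T, flowPayoff urR ulL lam c α x y t)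
        + max (urR * x T + urL * y T) (ulR * x T + ulL * y T)
      ≤ max (max (urR * x 0 + urL * y 0) (ulR * x 0 + ulL * y 0))
          ((lam * urR - c) / (rho + lam) * x 0 + (lam * ulL - c) / (rho + lam) * y 0) := by
  set V := stoppedPayoff urR ulL lam c α x y
  have hrl : 0 < rho + lam := by linarith
  have hcont : ∀ A B, ContinuousOn (V A B) (Icc 0 T) := fun A B => by
    simpa [uIcc_of_le hT] using (absolutelyContinuousOnInterval_stoppedPayoff hα_meas hα
      hx.absCont hy.absCont A B).continuousOn
  have hanti : AntitoneOn (V ((lam * urR - c) / (rho + lam)) ((lam * ulL - c) / (rho + lam)))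
      (Icc 0 T) := fun s hs u hu hsu =>
    stoppedPayoff_le hα_meas hα hx hy hrl hlam.le ((div_le_iff₀ hrl).2 (by nlinarith))
      ((div_le_iff₀ hrl).2 (by nlinarith)) hs.1 hsu hu.2 fun t _ => le_rfl
  have hstop : ∀ A B, A ≤ urR → B ≤ ulL → V A B T
      ≤ max (V A B 0) (V ((lam * urR - c) / (rho + lam)) ((lam * ulL - c) / (rho + lam)) 0) :=
    fun A B hA hB => le_max_of_antitoneOn_of_lt hT (hcont A B) (hcont _ _) hanti
      fun s u hs hsu hu hlt => stoppedPayoff_le hα_meas hα hx hy hrl hlam.le hA hB hs hsu hu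
        fun t ht => by have := (hlt t ht).le; simp only [V, stoppedPayoff] at this; linarith
  have h1 := hstop urR urL le_rfl hurL
  have h2 := hstop ulR ulL hulR le_rfl
  simp only [V, stoppedPayoff, intervalIntegral.integral_same, zero_add] at h1 h2
  rw [add_max, ← add_assoc, ← add_assoc]
  refine max_le (h1.trans (max_le_max_right _ (le_max_left _ _)))
    (h2.trans (max_le_max_right _ (le_max_right _ _)))

end Lyapunov

section Values

variable {urR ulR urL ulL lam rho c : ℝ}

theorem mul_U_eq_max {E q x y : ℝ} (hx : E * q = x) (hy : E * (1 - q) = y) (hx0 : 0 ≤ x)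
    (hy0 : 0 ≤ y) :
    E * U urR ulR urL ulL lam rho c q = max (urR * x + urL * y) (ulR * x + ulL * y) := by
  have hE : E = x + y := by linear_combination hx + hy
  rw [U, mul_max_of_nonneg _ _ (hE ▸ add_nonneg hx0 hy0), Ur, Ul]
  congr 1
  · linear_combination urR * hx + urL * hy
  · linear_combination ulR * hx + ulL * hy

theorem UFA_eq (q : ℝ) : UFA urR ulR urL ulL lam rho c q
    = (lam * urR - c) / (rho + lam) * q + (lam * ulL - c) / (rho + lam) * (1 - q) := by
  rw [UFA, div_mul_eq_mul_div, div_mul_eq_mul_div, ← add_div]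
  ring_nf

end Values

theorem payoff_upper_bound_general
    (urR ulR urL ulL lam rho c : ℝ)
    (h_urR : urR > max 0 ulR) (h_ulL : ulL > max 0 urL)
    (h_lam : 0 < lam) (h_rho : 0 ≤ rho) (h_c : 0 ≤ c)
    (p0 : ℝ) (hp0 : p0 ∈ Set.Icc (0 : ℝ) 1)
    (T : ℝ) (hT : 0 ≤ T)
    (α : ℝ → ℝ) (hα_meas : Measurable α) (hα : ∀ t, α t ∈ Set.Icc (0 : ℝ) 1)
    (p : ℝ → ℝ) (hp_diff : Differentiable ℝ p) (hp_init : p 0 = p0)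
    (hp_ode : ∀ t ∈ Set.Icc (0 : ℝ) T,
      deriv p t = -lam * (2 * α t - 1) * p t * (1 - p t))
    (P : ℝ → ℝ)
    (hP : ∀ t, P t = p0 * Real.exp (-lam * ∫ s in (0 : ℝ)..t, α s)
      + (1 - p0) * Real.exp (-lam * ∫ s in (0 : ℝ)..t, (1 - α s))) :
    (∫ t in (0 : ℝ)..T,
        Real.exp (-rho * t) * P t
          * (lam * α t * p t * urR + lam * (1 - α t) * (1 - p t) * ulL - c))
      + Real.exp (-rho * T) * P T * U urR ulR urL ulL lam rho c (p T)
    ≤ max (U urR ulR urL ulL lam rho c p0) (UFA urR ulR urL ulL lam rho c p0) := by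
  obtain ⟨hurR, hulR⟩ := max_lt_iff.1 h_urR
  obtain ⟨hulL, hurL⟩ := max_lt_iff.1 h_ulL
  set x := fun t => p0 * survival (fun s => rho + lam * α s) t
  set y := fun t => (1 - p0) * survival (fun s => rho + lam * (1 - α s)) t
  have hx : DecaysAtRate _ x T :=
    (decaysAtRate_survival_add_mul h_lam.le h_rho hα_meas hα hT).const_mul hp0.1
  have hy : DecaysAtRate _ y T :=
    (decaysAtRate_survival_add_mul (α := fun t => 1 - α t) h_lam.le h_rho
      (measurable_const.sub hα_meas) (fun t => one_sub_mem_Icc (hα t)) hT).const_mul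
      (sub_nonneg.2 hp0.2)
  have hmass := fun t (ht : t ∈ Icc 0 T) =>
    discounted_mul_belief_eq (rho := rho) h_lam.le hα_meas hα hp_diff hp_init hp_ode hP ht
  have hflow : ∀ t ∈ uIcc 0 T, Real.exp (-rho * t) * P t
      * (lam * α t * p t * urR + lam * (1 - α t) * (1 - p t) * ulL - c)
        = flowPayoff urR ulL lam c α x y t := fun t ht => by
    rw [uIcc_of_le hT] at ht
    simp only [flowPayoff, x, y]
    linear_combination (lam * α t * urR - c) * (hmass t ht).1
      + (lam * (1 - α t) * ulL - c) * (hmass t ht).2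
  have hTT : T ∈ Icc 0 T := ⟨hT, le_rfl⟩
  rw [intervalIntegral.integral_congr hflow, mul_U_eq_max (hmass T hTT).1 (hmass T hTT).2
    (hx.nonneg T hTT) (hy.nonneg T hTT)]
  refine (integral_flowPayoff_add_max_le hα_meas hα hx hy h_lam h_rho h_c hurR.le hulL.le
    hulR.le hurL.le hT).trans_eq ?_
  rw [UFA_eq, ← one_mul (U urR ulR urL ulL lam rho c p0),
    mul_U_eq_max (one_mul p0) (one_mul (1 - p0)) hp0.1 (sub_nonneg.2 hp0.2)]
  simp [x, y]

/-- Upper bound on the payoff of any attention strategy `(α, T)`: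
the expected payoff is at most `max{U(p₀), U^FA(p₀)}`. -/
theorem payoff_upper_bound
    (urR ulR urL ulL lam rho c : ℝ)
    (h_urR : urR > max 0 ulR) (h_ulL : ulL > max 0 urL)
    (h_lam : 0 < lam) (h_rho : 0 ≤ rho) (h_c : 0 ≤ c)
    (h_nz : rho ≠ 0 ∨ c ≠ 0)
    (p0 : ℝ) (hp0 : p0 ∈ Set.Icc (0 : ℝ) 1)
    (T : ℝ) (hT : 0 ≤ T)
    (α : ℝ → ℝ) (hα_meas : Measurable α) (hα : ∀ t, α t ∈ Set.Icc (0 : ℝ) 1)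
    (p : ℝ → ℝ) (hp_diff : Differentiable ℝ p) (hp_init : p 0 = p0)
    (hp_ode : ∀ t ∈ Set.Icc (0 : ℝ) T,
      deriv p t = -lam * (2 * α t - 1) * p t * (1 - p t))
    (P : ℝ → ℝ)
    (hP : ∀ t, P t = p0 * Real.exp (-lam * ∫ s in (0 : ℝ)..t, α s)
      + (1 - p0) * Real.exp (-lam * ∫ s in (0 : ℝ)..t, (1 - α s))) :
    (∫ t in (0 : ℝ)..T,
        Real.exp (-rho * t) * P t
          * (lam * α t * p t * urR + lam * (1 - α t) * (1 - p t) * ulL - c))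
      + Real.exp (-rho * T) * P T * U urR ulR urL ulL lam rho c (p T)
    ≤ max (U urR ulR urL ulL lam rho c p0) (UFA urR ulR urL ulL lam rho c p0) :=
  payoff_upper_bound_general urR ulR urL ulL lam rho c h_urR h_ulL h_lam h_rho h_c p0 hp0 T hT α
    hα_meas hα p hp_diff hp_init hp_ode P hP
end
end
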